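/- arXiv:2008.04153 — 10 statements merged into one kernel-verified Lean document; each statement's English description precedes it below -/
import Mathlib

section
/- Let A_0 = {a_s(n_s)}_{s=0}^k be an m-cover of ℤ with a_0(n_0) essential. Let m_1,...,m_k be integers with gcd(m_s,n_s) = 1 for each s ∈ {1,...,k}. Let F be a field of characteristic p with p not dividing lcm(n_1,...,n_k), and for each s ∈ {1,...,k} let X_s = {b_s, c_s} be a subset of F of cardinality 2. Then there exists α ∈ [0,1) such that for every r ∈ {0,1,...,n_0−1}, the set { x_1+⋯+x_k : x_s ∈ X_s for all s, and the fractional part {∑_{1≤s≤k, x_s = c_s} m_s/n_s} equals (α+r)/n_0 } has cardinality at least min{p', m}, where p' = p if p is a prime and p' = +∞ if p = 0. -/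
/-!
Let `ζ` be a primitive `N`-th root of unity, `N = lcm n_s`, in an algebraic closure of `F`, and
write `m_s / n_s = e_s / N` and `ψ_s(x) = ζ ^ (e_s (x - a_s))`, so that `ψ_s(x) = 1` exactly when
`x ∈ a_s (mod n_s)`. A set function `w` on the subsets of the indices gives the signal
`x ↦ ∑_J w(J) ∏_{s ∈ J} (-ψ_s(x)) ∏_{s ∉ J} (1 - ψ_s(x))`, which only sees the values of `w` on
supersets of the set of classes containing `x`, and whose discrete Fourier coefficients are
signed sums of `∑_{J ⊆ I} w(J)` over the `I` with `∑_{s ∈ I} e_s` in a fixed class mod `N`.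

For `w(J) = (m-1)! ∏_{s ∈ J} d_s` on `(m-1)`-sets, with `d_s = c_s - b_s`, the signal is nonzero
at an essential point and vanishes off `a₀ (mod n₀)`; hence some Fourier coefficient is nonzero,
and with it every coefficient in the same class mod `N / n₀`, which fixes `α`. If the sums
`∑_{s ∈ I} d_s` over one such class took fewer than `m` values, a monic `Q` of degree `m - 1`
would vanish on all of them. The set function whose subset sums are `I ↦ Q(∑_{s ∈ I} d_s)` agrees
with `w` on all sets of size at least `m - 1`, so it has the same signal, yet its coefficient at
that class vanishes. When `m > p`, discarding `m - p` classes through an essential point first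
reduces to an `m'`-cover with `m' ≤ p`, so that `(m' - 1)!` is invertible.
-/

open scoped Classical Nat
open Finset Polynomial

section RootsOfUnity

variable {K : Type*} [Field K] {ι : Type*} {ζ : K} {N : ℕ}

theorem IsPrimitiveRoot.zpow_eq_zpow_of_dvd_sub (hζ : IsPrimitiveRoot ζ N) (hN : N ≠ 0)
    {u v : ℤ} (h : (N : ℤ) ∣ u - v) : ζ ^ u = ζ ^ v := by
  rw [← sub_add_cancel u v, zpow_add₀ (hζ.ne_zero hN), (hζ.zpow_eq_one_iff_dvd _).mpr h, one_mul]

theorem IsPrimitiveRoot.natCast_ne_zero (hζ : IsPrimitiveRoot ζ N) (hN : N ≠ 0) : (N : K) ≠ 0 :=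
  have : NeZero N := ⟨hN⟩
  hζ.neZero'.out

theorem IsPrimitiveRoot.sum_range_zpow_mul (hζ : IsPrimitiveRoot ζ N) (t : ℤ) :
    ∑ x ∈ range N, ζ ^ (t * x) = if (N : ℤ) ∣ t then (N : K) else 0 := by
  simp_rw [zpow_mul, zpow_natCast]
  split_ifs with ht
  · simp [(hζ.zpow_eq_one_iff_dvd t).mpr ht]
  · rw [geom_sum_eq (mt (hζ.zpow_eq_one_iff_dvd t).mp ht), ← zpow_natCast, ← zpow_mul,
      mul_comm, zpow_mul, hζ.zpow_eq_one, one_zpow, sub_self, zero_div]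

theorem Finset.prod_zpow_eq_zpow_sum (hζ : ζ ≠ 0) (I : Finset ι) (f : ι → ℤ) :
    ∏ s ∈ I, ζ ^ f s = ζ ^ ∑ s ∈ I, f s := by
  induction I using Finset.induction_on with
  | empty => simp
  | insert i I hi ih => rw [prod_insert hi, sum_insert hi, zpow_add₀ hζ, ih]

end RootsOfUnity

noncomputable section

namespace SunCover

section IndicatorProd

variable {R : Type*} {κ : Type*} [Fintype κ]

/-- For `p` with values in `{0, 1}`, this is `(-1) ^ #J` times the indicator of
`J = {s | p s = 1}`. -/
def indicatorProd [CommRing R] (p : κ → R) (J : Finset κ) : R :=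
  (∏ s ∈ J, -p s) * ∏ s ∈ Jᶜ, (1 - p s)

theorem sum_prod_neg_of_subset [CommRing R] (p : κ → R) (J : Finset κ) :
    ∑ I with J ⊆ I, ∏ s ∈ I, -p s = indicatorProd p J := by
  have hsupersets : ({I | J ⊆ I} : Finset (Finset κ)) = Jᶜ.powerset.image (J ∪ ·) := by
    ext I
    simp only [mem_filter, mem_univ, true_and, mem_image, mem_powerset]
    refine ⟨fun h => ⟨I \ J, ?_, union_sdiff_of_subset h⟩, ?_⟩
    · intro s; simp +contextual
    · rintro ⟨T, -, rfl⟩; exact subset_union_left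
  have hdisj : ∀ T ∈ Jᶜ.powerset, Disjoint J T := fun T hT =>
    disjoint_of_subset_right (mem_powerset.mp hT) disjoint_compl_right
  rw [hsupersets, sum_image, indicatorProd, show ∏ s ∈ Jᶜ, (1 - p s) = ∏ s ∈ Jᶜ, (1 + -p s) by
    simp only [sub_eq_add_neg], prod_one_add, mul_sum]
  · exact sum_congr rfl fun T hT => prod_union (hdisj T hT)
  · intro T hT T' hT' h
    have := congrArg (· \ J) h
    simpa [union_sdiff_left, sdiff_eq_self_of_disjoint (hdisj T hT).symm,
      sdiff_eq_self_of_disjoint (hdisj T' hT').symm] using this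

theorem sum_sum_powerset_mul_prod_neg [CommRing R] (w : Finset κ → R) (p : κ → R) :
    ∑ I, (∑ J ∈ I.powerset, w J) * ∏ s ∈ I, -p s = ∑ J, w J * indicatorProd p J := by
  simp_rw [sum_mul]
  rw [sum_comm' (t' := univ) (s' := fun J => {I | J ⊆ I})]
  · simp_rw [← mul_sum, sum_prod_neg_of_subset]
  · simp

theorem indicatorProd_eq_zero [CommRing R] {p : κ → R} {C J : Finset κ}
    (hC : ∀ s ∈ C, p s = 1) (hJ : ¬ C ⊆ J) : indicatorProd p J = 0 := by
  obtain ⟨s, hsC, hsJ⟩ := not_subset.mp hJ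
  exact mul_eq_zero_of_right _ (prod_eq_zero (mem_compl.mpr hsJ) (by rw [hC s hsC, sub_self]))

theorem indicatorProd_ne_zero [CommRing R] [IsDomain R] {p : κ → R} {C : Finset κ}
    (hp : ∀ s, p s ≠ 0) (hC : ∀ s, p s = 1 ↔ s ∈ C) : indicatorProd p C ≠ 0 := by
  refine mul_ne_zero (prod_ne_zero_iff.mpr fun s _ => neg_ne_zero.mpr (hp s))
    (prod_ne_zero_iff.mpr fun s hs => sub_ne_zero.mpr fun h => ?_)
  exact mem_compl.mp hs ((hC s).mp h.symm)

end IndicatorProd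

section Fourier

variable {K : Type*} [Field K] {κ : Type*} [Fintype κ] (ζ : K) (N : ℕ) (e a : κ → ℤ)

def phase (s : κ) (x : ℤ) : K := ζ ^ (e s * (x - a s))

def signal (w : Finset κ → K) (x : ℤ) : K :=
  ∑ J, w J * indicatorProd (phase ζ e a · x) J

def dualCoeff (w : Finset κ → K) (j : ℤ) : K :=
  ∑ I with (∑ s ∈ I, e s) % N = j,
    (∑ J ∈ I.powerset, w J) * ((-1) ^ #I * ζ ^ (-∑ s ∈ I, e s * a s))

variable {ζ N e a}

theorem signal_eq_sum_dualCoeff (hζ : IsPrimitiveRoot ζ N) (hN : N ≠ 0) (w : Finset κ → K)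
    (x : ℤ) :
    signal ζ e a w x = ∑ j ∈ Ico 0 (N : ℤ), dualCoeff ζ N e a w j * ζ ^ (j * x) := by
  have hmaps : ∀ I ∈ (univ : Finset (Finset κ)), (∑ s ∈ I, e s) % N ∈ Ico 0 (N : ℤ) := by
    intro I _
    simp only [mem_Ico]
    exact ⟨Int.emod_nonneg _ (by exact_mod_cast hN), Int.emod_lt_of_pos _ (by omega)⟩
  rw [signal, ← sum_sum_powerset_mul_prod_neg, ← sum_fiberwise_of_maps_to hmaps]
  refine sum_congr rfl fun j _ => ?_
  rw [dualCoeff, sum_mul]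
  refine sum_congr rfl fun I hI => ?_
  rw [← (mem_filter.mp hI).2, mul_assoc]
  congr 1
  have hζ0 := hζ.ne_zero hN
  simp only [phase, prod_neg]
  rw [prod_zpow_eq_zpow_sum hζ0, mul_assoc, ← zpow_add₀ hζ0]
  congr 1
  refine hζ.zpow_eq_zpow_of_dvd_sub hN ?_
  have hsum : ∑ s ∈ I, e s * (x - a s) = (∑ s ∈ I, e s) * x - ∑ s ∈ I, e s * a s := by
    simp only [mul_sub, sum_sub_distrib, sum_mul]
  rw [hsum]
  exact ⟨(∑ s ∈ I, e s) / N * x,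
    by linear_combination (-x) * Int.emod_add_mul_ediv (∑ s ∈ I, e s) N⟩

theorem sum_signal_mul_zpow (hζ : IsPrimitiveRoot ζ N) (hN : N ≠ 0) (w : Finset κ → K) {j : ℤ}
    (hj : j ∈ Ico 0 (N : ℤ)) :
    ∑ x ∈ range N, signal ζ e a w x * ζ ^ (-(j * x)) = N * dualCoeff ζ N e a w j := by
  have hζ0 := hζ.ne_zero hN
  simp_rw [signal_eq_sum_dualCoeff hζ hN, sum_mul, mul_assoc, ← zpow_add₀ hζ0]
  rw [sum_comm]
  simp_rw [← mul_sum, ← sub_eq_add_neg, ← sub_mul, hζ.sum_range_zpow_mul]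
  rw [sum_eq_single_of_mem j hj]
  · simp [mul_comm]
  · intro i hi hij
    rw [mem_Ico] at hi hj
    rw [if_neg fun h => hij (sub_eq_zero.mp (Int.eq_zero_of_abs_lt_dvd h
      (abs_sub_lt_iff.mpr ⟨by omega, by omega⟩))), mul_zero]

theorem dualCoeff_eq_of_signal_eq (hζ : IsPrimitiveRoot ζ N) (hN : N ≠ 0)
    {w w' : Finset κ → K} (h : ∀ x, signal ζ e a w x = signal ζ e a w' x) {j : ℤ}
    (hj : j ∈ Ico 0 (N : ℤ)) : dualCoeff ζ N e a w j = dualCoeff ζ N e a w' j := by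
  refine mul_left_cancel₀ (hζ.natCast_ne_zero hN) ?_
  simp_rw [← sum_signal_mul_zpow hζ hN _ hj, h]

theorem exists_dualCoeff_ne_zero (hζ : IsPrimitiveRoot ζ N) (hN : N ≠ 0) {w : Finset κ → K}
    {x : ℤ} (hx : signal ζ e a w x ≠ 0) : ∃ j ∈ Ico 0 (N : ℤ), dualCoeff ζ N e a w j ≠ 0 := by
  by_contra! h
  refine hx ?_
  rw [signal_eq_sum_dualCoeff hζ hN]
  exact sum_eq_zero fun j hj => by rw [h j hj, zero_mul]

theorem dualCoeff_eq_of_dvd_sub (hζ : IsPrimitiveRoot ζ N) (hN : N ≠ 0) {n₀ M : ℕ}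
    (hNM : n₀ * M = N) {a₀ : ℤ} {w : Finset κ → K}
    (hw : ∀ x, ¬ (n₀ : ℤ) ∣ x - a₀ → signal ζ e a w x = 0) {j j' : ℤ}
    (hj : j ∈ Ico 0 (N : ℤ)) (hj' : j' ∈ Ico 0 (N : ℤ)) (hM : (M : ℤ) ∣ j' - j) :
    dualCoeff ζ N e a w j' = ζ ^ (-((j' - j) * a₀)) * dualCoeff ζ N e a w j := by
  have hζ0 := hζ.ne_zero hN
  refine mul_left_cancel₀ (hζ.natCast_ne_zero hN) ?_
  rw [mul_left_comm, ← sum_signal_mul_zpow hζ hN _ hj, ← sum_signal_mul_zpow hζ hN _ hj', mul_sum]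
  refine sum_congr rfl fun x _ => ?_
  by_cases hx : (n₀ : ℤ) ∣ x - a₀
  · obtain ⟨u, hu⟩ := hx
    obtain ⟨q, hq⟩ := hM
    rw [mul_left_comm, ← zpow_add₀ hζ0]
    congr 1
    refine hζ.zpow_eq_zpow_of_dvd_sub hN ⟨-(q * u), ?_⟩
    rw [← hNM]
    push_cast
    linear_combination (a₀ - x) * hq - (M * q) * hu
  · simp [hw x hx]

theorem signal_congr {w w' : Finset κ → K} {x : ℤ} {C : Finset κ}
    (hC : ∀ s ∈ C, phase ζ e a s x = 1) (h : ∀ J, C ⊆ J → w J = w' J) :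
    signal ζ e a w x = signal ζ e a w' x := by
  refine sum_congr rfl fun J _ => ?_
  by_cases hJ : C ⊆ J
  · rw [h J hJ]
  · rw [indicatorProd_eq_zero hC hJ, mul_zero, mul_zero]

theorem signal_ne_zero (hζ : ζ ≠ 0) {w : Finset κ → K} {x : ℤ} {C : Finset κ}
    (hC : ∀ s, phase ζ e a s x = 1 ↔ s ∈ C) (hw : w C ≠ 0)
    (h : ∀ J, C ⊆ J → J ≠ C → w J = 0) : signal ζ e a w x ≠ 0 := by
  rw [signal_congr (w' := fun J => if J = C then w C else 0) (fun s => (hC s).mpr)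
    (fun J hJ => by split_ifs with hJC <;> simp_all), signal]
  simp only [ite_mul, zero_mul, sum_ite_eq', mem_univ, if_true]
  exact mul_ne_zero hw (indicatorProd_ne_zero (fun s => zpow_ne_zero _ hζ) hC)

end Fourier

section PowerWeights

variable {R : Type*} {κ : Type*}

theorem injective_of_image_univ_eq {e : ℕ} {J : Finset κ} (h : #J = e) {f : Fin e → κ}
    (hf : univ.image f = J) : Function.Injective f := by
  have : #(univ.image f) = #(univ : Finset (Fin e)) := by rw [hf, h, card_univ, Fintype.card_fin]
  simpa using card_image_iff.mp this

variable [Fintype κ]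

/-- The part of `(∑ s ∈ I, d s) ^ e` made of the monomials whose support is exactly `J`. -/
def powPart [CommSemiring R] (d : κ → R) (e : ℕ) (J : Finset κ) : R :=
  ∑ f : Fin e → κ with univ.image f = J, ∏ i, d (f i)

theorem sum_powerset_powPart [CommSemiring R] (d : κ → R) (e : ℕ) (I : Finset κ) :
    ∑ J ∈ I.powerset, powPart d e J = (∑ s ∈ I, d s) ^ e := by
  have hmaps : ∀ f ∈ Fintype.piFinset fun _ : Fin e => I, univ.image f ∈ I.powerset := by
    intro f hf
    simpa [subset_iff] using hf
  rw [sum_pow', ← sum_fiberwise_of_maps_to hmaps]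
  refine sum_congr rfl fun J hJ => sum_congr ?_ fun _ _ => rfl
  ext f
  simp only [mem_filter, mem_univ, true_and, Fintype.mem_piFinset]
  refine ⟨fun hf => ⟨fun i => mem_powerset.mp hJ ?_, hf⟩, fun hf => hf.2⟩
  exact hf ▸ mem_image_of_mem f (mem_univ i)

theorem powPart_eq_zero [CommSemiring R] (d : κ → R) {e : ℕ} {J : Finset κ} (h : e < #J) :
    powPart d e J = 0 := by
  refine sum_eq_zero fun f hf => absurd ?_ h.not_ge
  rw [← (mem_filter.mp hf).2]
  simpa using card_image_le (s := univ) (f := f)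

theorem card_image_univ_eq {e : ℕ} {J : Finset κ} (h : #J = e) :
    #({f : Fin e → κ | univ.image f = J} : Finset _) = e ! := by
  have hJ : Fintype.card J = e := by simp [h]
  have hperm := Fintype.card_equiv (Fintype.equivFinOfCardEq hJ).symm
  rw [Fintype.card_fin] at hperm
  rw [← hperm, ← card_univ]
  refine (card_bij (fun σ _ i => (σ i : κ)) (fun σ _ => ?_) (fun σ _ τ _ hστ => ?_)
    (fun f hf => ?_)).symm
  · simp only [mem_filter, mem_univ, true_and]
    ext s
    simp only [mem_image, mem_univ, true_and]
    exact ⟨fun ⟨i, hi⟩ => hi ▸ (σ i).2, fun hs => ⟨σ.symm ⟨s, hs⟩, by simp⟩⟩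
  · ext i
    exact congrFun hστ i
  · have hf := (mem_filter.mp hf).2
    refine ⟨Equiv.ofBijective (fun i => ⟨f i, hf ▸ mem_image_of_mem f (mem_univ i)⟩) ?_,
      mem_univ _, rfl⟩
    rw [Fintype.bijective_iff_injective_and_card, hJ, Fintype.card_fin]
    exact ⟨fun i j hij => injective_of_image_univ_eq h hf (congrArg Subtype.val hij), rfl⟩

theorem powPart_of_card_eq [CommSemiring R] (d : κ → R) {e : ℕ} {J : Finset κ} (h : #J = e) :
    powPart d e J = e ! * ∏ s ∈ J, d s := by
  rw [powPart, sum_congr rfl fun f hf => ?_, sum_const, card_image_univ_eq h, nsmul_eq_mul]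
  have hf := (mem_filter.mp hf).2
  rw [← hf, prod_image fun i _ j _ hij => injective_of_image_univ_eq h hf hij]

def topWeight [CommSemiring R] (d : κ → R) (k : ℕ) (J : Finset κ) : R :=
  if #J = k then k ! * ∏ s ∈ J, d s else 0

def polyWeight [CommSemiring R] (Q : R[X]) (d : κ → R) (J : Finset κ) : R :=
  ∑ i ∈ range (Q.natDegree + 1), Q.coeff i * powPart d i J

theorem sum_powerset_polyWeight [CommSemiring R] (Q : R[X]) (d : κ → R) (I : Finset κ) :
    ∑ J ∈ I.powerset, polyWeight Q d J = Q.eval (∑ s ∈ I, d s) := by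
  simp_rw [eval_eq_sum_range, polyWeight]
  rw [sum_comm]
  simp_rw [← mul_sum, sum_powerset_powPart]

theorem polyWeight_eq_topWeight [CommSemiring R] {Q : R[X]} (hQ : Q.Monic)
    (d : κ → R) {J : Finset κ} (hJ : Q.natDegree ≤ #J) :
    polyWeight Q d J = topWeight d Q.natDegree J := by
  rw [polyWeight, topWeight]
  split_ifs with hJQ
  · rw [sum_eq_single_of_mem Q.natDegree (self_mem_range_succ _), ← hJQ, powPart_of_card_eq d rfl,
      hJQ, ← leadingCoeff, hQ.leadingCoeff, one_mul]
    intro i hi hiQ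
    rw [powPart_eq_zero d (by rw [mem_range] at hi; omega), mul_zero]
  · refine sum_eq_zero fun i hi => ?_
    rw [powPart_eq_zero d (by rw [mem_range] at hi; omega), mul_zero]

theorem exists_monic_natDegree_eq_forall_eval_eq_zero [CommRing R] [Nontrivial R] {V : Finset R}
    {k : ℕ} (hk : #V ≤ k) : ∃ Q : R[X], Q.Monic ∧ Q.natDegree = k ∧ ∀ v ∈ V, Q.eval v = 0 := by
  have hmonic : (∏ v ∈ V, (X - C v)).Monic := monic_prod_of_monic _ _ fun v _ => monic_X_sub_C v
  refine ⟨(∏ v ∈ V, (X - C v)) * X ^ (k - #V), hmonic.mul (monic_X_pow _), ?_, fun v hv => ?_⟩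
  · rw [hmonic.natDegree_mul (monic_X_pow _), natDegree_prod_of_monic _ _
      fun v _ => monic_X_sub_C v]
    simp only [natDegree_X_sub_C, sum_const, smul_eq_mul, mul_one, natDegree_X_pow]
    omega
  · rw [eval_mul, eval_prod, prod_eq_zero hv (by simp), zero_mul]

end PowerWeights

section Covers

variable {κ : Type*} [Fintype κ] {a : κ → ℤ} {n : κ → ℕ}

def coverSet (a : κ → ℤ) (n : κ → ℕ) (x : ℤ) : Finset κ := {s | (n s : ℤ) ∣ x - a s}

/-- The system `a₀ (mod n₀)`, `a s (mod n s)` is an `m`-cover of `ℤ`. -/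
def IsCover (m : ℕ) (a₀ : ℤ) (n₀ : ℕ) (a : κ → ℤ) (n : κ → ℕ) : Prop :=
  ∀ x, m ≤ #(coverSet a n x) + if (n₀ : ℤ) ∣ x - a₀ then 1 else 0

theorem coverSet_add_of_dvd {L : ℕ} (h : ∀ s, n s ∣ L) (x : ℤ) :
    coverSet a n (x + L) = coverSet a n x := by
  ext s
  simp only [coverSet, mem_filter, mem_univ, true_and, add_sub_right_comm]
  exact dvd_add_left (Int.natCast_dvd_natCast.mpr (h s))

theorem dvd_sub_of_card_coverSet_lt {m : ℕ} {a₀ : ℤ} {n₀ : ℕ}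
    (hcover : IsCover m a₀ n₀ a n) {x : ℤ}
    (hx : #(coverSet a n x) < m) : (n₀ : ℤ) ∣ x - a₀ := by
  by_contra h
  have := hcover x
  rw [if_neg h] at this
  omega

theorem dvd_of_card_coverSet_lt {m : ℕ} {a₀ : ℤ} {n₀ : ℕ}
    (hcover : IsCover m a₀ n₀ a n) {x : ℤ}
    (hx : #(coverSet a n x) < m) {L : ℕ} (hL : ∀ s, n s ∣ L) : n₀ ∣ L := by
  have h₁ := dvd_sub_of_card_coverSet_lt hcover hx
  have h₂ := dvd_sub_of_card_coverSet_lt hcover (x := x + L) (by rwa [coverSet_add_of_dvd hL])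
  exact Int.natCast_dvd_natCast.mp (by simpa using dvd_sub h₂ h₁)

theorem card_coverSet_subtype [DecidableEq κ] (R : Finset κ) (x : ℤ) :
    #(coverSet (fun s : {s // s ∉ R} => a s) (fun s => n s) x) = #(coverSet a n x \ R) := by
  rw [← card_map (Function.Embedding.subtype _)]
  congr 1
  ext s
  simp [coverSet, and_comm]

theorem exists_subsystem_cover [DecidableEq κ] {m m' : ℕ} {a₀ : ℤ} {n₀ : ℕ}
    (hcover : IsCover m a₀ n₀ a n)
    (hess : ∃ x, #(coverSet a n x) < m) (hm' : 0 < m') (hm'm : m' ≤ m) :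
    ∃ R : Finset κ,
      IsCover m' a₀ n₀ (fun s : {s // s ∉ R} => a s) (fun s => n s) ∧
      ∃ x, #(coverSet (fun s : {s // s ∉ R} => a s) (fun s => n s) x) < m' := by
  obtain ⟨x₀, hx₀⟩ := hess
  have hx₀card : m - m' ≤ #(coverSet a n x₀) := by
    have := hcover x₀
    split_ifs at this <;> omega
  obtain ⟨R, hRsub, hRcard⟩ := exists_subset_card_eq hx₀card
  refine ⟨R, fun x => ?_, x₀, ?_⟩
  · have h1 := hcover x
    have h2 := le_card_sdiff R (coverSet a n x)
    rw [card_coverSet_subtype]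
    split_ifs at h1 ⊢ <;> omega
  · rw [card_coverSet_subtype, card_sdiff_of_subset hRsub]
    omega

end Covers

section Weights

variable {κ : Type*} {n : κ → ℕ} {mm : κ → ℤ} {N : ℕ}

/-- The integer `e s` with `mm s / n s = e s / N`. -/
def weight (n : κ → ℕ) (mm : κ → ℤ) (N : ℕ) (s : κ) : ℤ := (N / n s : ℕ) * mm s

theorem phase_weight_eq_one_iff [Fintype κ] {K : Type*} [Field K] {ζ : K}
    (hζ : IsPrimitiveRoot ζ N) {s : κ} (hs : n s ∣ N) (hN : N ≠ 0)
    (hco : IsCoprime (mm s) (n s)) (a : κ → ℤ) (x : ℤ) :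
    phase ζ (weight n mm N) a s x = 1 ↔ (n s : ℤ) ∣ x - a s := by
  obtain ⟨q, hq⟩ := hs
  have hq0 : q ≠ 0 := by rintro rfl; simp_all
  have hns : 0 < n s := Nat.pos_of_ne_zero (by rintro h; simp_all)
  rw [phase, hζ.zpow_eq_one_iff_dvd, weight, hq, Nat.mul_div_cancel_left _ hns]
  push_cast
  rw [mul_comm (n s : ℤ), mul_assoc, mul_dvd_mul_iff_left (by exact_mod_cast hq0)]
  exact ⟨hco.symm.dvd_of_dvd_mul_left, fun h => dvd_mul_of_dvd_right h _⟩

theorem fract_sum_div_eq_iff (hN : N ≠ 0) (hnN : ∀ s, n s ∣ N) (I : Finset κ) (t : ℤ) :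
    Int.fract (∑ s ∈ I, (mm s : ℝ) / n s) = t / N ↔ (∑ s ∈ I, weight n mm N s) % N = t := by
  have hNR : (N : ℝ) ≠ 0 := by exact_mod_cast hN
  have hsum : ∑ s ∈ I, (mm s : ℝ) / n s = ((∑ s ∈ I, weight n mm N s : ℤ) : ℝ) / N := by
    push_cast
    rw [sum_div]
    refine sum_congr rfl fun s _ => ?_
    have hns : (n s : ℝ) ≠ 0 := Nat.cast_ne_zero.mpr (ne_zero_of_dvd_ne_zero hN (hnN s))
    rw [weight, Int.cast_mul, Int.cast_natCast, Nat.cast_div (hnN s) hns]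
    field_simp
  rw [hsum, Int.fract_div_intCast_eq_div_intCast_mod, div_left_inj' hNR, Int.cast_inj]

theorem fract_sum_div_eq_iff_of_eq_mul {n₀ M : ℕ} (hNM : N = n₀ * M) (hN : N ≠ 0)
    (hnN : ∀ s, n s ∣ N) (I : Finset κ) (j : ℤ) (r : ℕ) :
    Int.fract (∑ s ∈ I, (mm s : ℝ) / n s) = (Int.fract ((j : ℝ) / M) + r) / n₀ ↔
      (∑ s ∈ I, weight n mm N s) % N = j % M + r * M := by
  have hn₀ : (n₀ : ℝ) ≠ 0 := by rintro h; simp_all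
  have hM : (M : ℝ) ≠ 0 := by rintro h; simp_all
  rw [← fract_sum_div_eq_iff hN hnN, Int.fract_div_intCast_eq_div_intCast_mod, hNM]
  congr! 1
  field_simp
  push_cast
  ring

theorem emod_add_mul_mem_Ico (j : ℤ) {n₀ M r : ℕ} (hM : 0 < M) (hr : r < n₀) :
    j % M + r * M ∈ Ico 0 ((n₀ * M : ℕ) : ℤ) := by
  have h₁ := Int.emod_nonneg j (by omega : (M : ℤ) ≠ 0)
  have h₂ := Int.emod_lt_of_pos j (by omega : (0 : ℤ) < M)
  have h₃ : ((r : ℤ) + 1) * M ≤ n₀ * M :=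
    mul_le_mul_of_nonneg_right (by exact_mod_cast hr) (by omega)
  rw [mem_Ico]
  push_cast
  constructor <;> nlinarith

end Weights

section TopWeight

variable {K : Type*} [Field K] {κ : Type*} [Fintype κ] {ζ : K} {N : ℕ} {e a : κ → ℤ}

theorem signal_topWeight_eq_zero (d : κ → K) {k : ℕ} {x : ℤ}
    (hx : k < #({s | phase ζ e a s x = 1} : Finset κ)) :
    signal ζ e a (topWeight d k) x = 0 := by
  rw [signal_congr (w' := 0) (C := {s | phase ζ e a s x = 1}) (by simp) fun J hJ => ?_]
  · simp [signal]
  · have := card_le_card hJ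
    rw [topWeight, if_neg (by omega), Pi.zero_apply]

theorem exists_dualCoeff_topWeight_ne_zero (hζ : IsPrimitiveRoot ζ N) (hN : N ≠ 0) {d : κ → K}
    (hd : ∀ s, d s ≠ 0) {k : ℕ} (hk : (k ! : K) ≠ 0) {x : ℤ}
    (hx : #({s | phase ζ e a s x = 1} : Finset κ) = k) :
    ∃ j ∈ Ico 0 (N : ℤ), dualCoeff ζ N e a (topWeight d k) j ≠ 0 := by
  refine exists_dualCoeff_ne_zero hζ hN
    (signal_ne_zero (hζ.ne_zero hN) (x := x) (C := {s | phase ζ e a s x = 1}) (by simp) ?_ ?_)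
  · rw [topWeight, if_pos hx]
    exact mul_ne_zero hk (prod_ne_zero_iff.mpr fun s _ => hd s)
  · intro J hCJ hJC
    rw [topWeight, if_neg fun hJ => hJC (eq_of_subset_of_card_le hCJ (by omega)).symm]

theorem lt_card_image_of_dualCoeff_topWeight_ne_zero (hζ : IsPrimitiveRoot ζ N) (hN : N ≠ 0)
    {k : ℕ} (hk : ∀ x, k ≤ #({s | phase ζ e a s x = 1} : Finset κ)) {d : κ → K} {t : ℤ}
    (ht : t ∈ Ico 0 (N : ℤ)) (hc : dualCoeff ζ N e a (topWeight d k) t ≠ 0) :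
    k < #(({I | (∑ s ∈ I, e s) % N = t} : Finset (Finset κ)).image fun I => ∑ s ∈ I, d s) := by
  by_contra! hV
  obtain ⟨Q, hQ, hQdeg, hQV⟩ := exists_monic_natDegree_eq_forall_eval_eq_zero hV
  have hsignal : ∀ x, signal ζ e a (polyWeight Q d) x = signal ζ e a (topWeight d k) x :=
    fun x => signal_congr (C := {s | phase ζ e a s x = 1}) (by simp) fun J hJ => by
      rw [polyWeight_eq_topWeight hQ d (hQdeg ▸ (hk x).trans (card_le_card hJ)), hQdeg]
  refine hc ?_
  rw [← dualCoeff_eq_of_signal_eq hζ hN hsignal ht, dualCoeff]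
  refine sum_eq_zero fun I hI => ?_
  rw [sum_powerset_polyWeight, hQV _ (mem_image_of_mem _ hI), zero_mul]

end TopWeight

section Main

variable {κ : Type*} [Fintype κ] {m : ℕ} {a₀ : ℤ} {n₀ : ℕ} {a : κ → ℤ} {n : κ → ℕ}
  {mm : κ → ℤ}

theorem le_card_image_of_isPrimitiveRoot {K : Type*} [Field K]
    (hcover : IsCover m a₀ n₀ a n)
    (hess : ∃ x, #(coverSet a n x) < m) (hmm : ∀ s, IsCoprime (mm s) (n s)) {ζ : K}
    (hζ : IsPrimitiveRoot ζ (univ.lcm n)) (hN : univ.lcm n ≠ 0) {d : κ → K}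
    (hd : ∀ s, d s ≠ 0) (hfac : ((m - 1)! : K) ≠ 0) :
    ∃ α : ℝ, 0 ≤ α ∧ α < 1 ∧ ∀ r : ℕ, r < n₀ →
      m ≤ #(({I | Int.fract (∑ s ∈ I, (mm s : ℝ) / n s) = (α + r) / n₀} : Finset (Finset κ)).image
        fun I => ∑ s ∈ I, d s) := by
  set N := univ.lcm n
  have hnN : ∀ s, n s ∣ N := fun s => dvd_lcm (mem_univ s)
  have hphase : ∀ x, ({s | phase ζ (weight n mm N) a s x = 1} : Finset κ) = coverSet a n x := by
    intro x
    ext s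
    simp [coverSet, phase_weight_eq_one_iff hζ (hnN s) hN (hmm s)]
  have hcover' : ∀ x, m - 1 ≤ #(coverSet a n x) := fun x => by
    have := hcover x
    split_ifs at this <;> omega
  obtain ⟨x₀, hx₀⟩ := hess
  obtain ⟨M, hNM⟩ := dvd_of_card_coverSet_lt hcover hx₀ hnN
  have hM : 0 < M := Nat.pos_of_ne_zero (by rintro rfl; exact hN (by simp [hNM]))
  obtain ⟨j, hj, hcj⟩ := exists_dualCoeff_topWeight_ne_zero hζ hN hd hfac (x := x₀)
    (by have := hcover' x₀; rw [hphase]; omega)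
  refine ⟨Int.fract ((j : ℝ) / M), Int.fract_nonneg _, Int.fract_lt_one _, fun r hr => ?_⟩
  have ht := hNM ▸ emod_add_mul_mem_Ico j hM hr
  have hsupp : ∀ x, ¬ (n₀ : ℤ) ∣ x - a₀ →
      signal ζ (weight n mm N) a (topWeight d (m - 1)) x = 0 := by
    intro x hx
    have := hcover x
    rw [if_neg hx] at this
    exact signal_topWeight_eq_zero d (by rw [hphase]; omega)
  have hct : dualCoeff ζ N (weight n mm N) a (topWeight d (m - 1)) (j % M + r * M) ≠ 0 := by
    rw [dualCoeff_eq_of_dvd_sub hζ hN hNM.symm hsupp hj ht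
      ⟨r - j / M, by linear_combination Int.emod_add_mul_ediv j M⟩]
    exact mul_ne_zero (zpow_ne_zero _ (hζ.ne_zero hN)) hcj
  simp_rw [fract_sum_div_eq_iff_of_eq_mul hNM hN hnN]
  have := lt_card_image_of_dualCoeff_topWeight_ne_zero hζ hN (fun x => (hphase x).symm ▸ hcover' x)
    ht hct
  omega

theorem le_card_image {F : Type*} [Field F]
    (hcover : IsCover m a₀ n₀ a n)
    (hess : ∃ x, #(coverSet a n x) < m) (hmm : ∀ s, IsCoprime (mm s) (n s))
    (hN : ((univ.lcm n : ℕ) : F) ≠ 0) {d : κ → F} (hd : ∀ s, d s ≠ 0)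
    (hfac : ((m - 1)! : F) ≠ 0) :
    ∃ α : ℝ, 0 ≤ α ∧ α < 1 ∧ ∀ r : ℕ, r < n₀ →
      m ≤ #(({I | Int.fract (∑ s ∈ I, (mm s : ℝ) / n s) = (α + r) / n₀} : Finset (Finset κ)).image
        fun I => ∑ s ∈ I, d s) := by
  let ι := algebraMap F (AlgebraicClosure F)
  have : NeZero ((univ.lcm n : ℕ) : AlgebraicClosure F) :=
    ⟨by rwa [← map_natCast ι, _root_.map_ne_zero]⟩
  obtain ⟨ζ, hζ⟩ := HasEnoughRootsOfUnity.exists_primitiveRoot (AlgebraicClosure F) (univ.lcm n)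
  obtain ⟨α, hα₀, hα₁, hα⟩ := le_card_image_of_isPrimitiveRoot hcover hess hmm hζ
    (by rintro h; simp [h] at hN) (d := fun s => ι (d s)) (fun s => by simp [ι, hd s])
    (by rwa [← map_natCast ι, _root_.map_ne_zero])
  refine ⟨α, hα₀, hα₁, fun r hr => (hα r hr).trans_eq ?_⟩
  rw [← card_image_of_injective _ ι.injective, image_image]
  simp [Function.comp_def, ι, map_sum]

end Main

section Sums

variable {κ : Type*} [Fintype κ] {F : Type*} [AddCommGroup F]

theorem sum_ite_mem_eq_add (b c : κ → F) (J : Finset κ) :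
    ∑ s, (if s ∈ J then c s else b s) = ∑ s, b s + ∑ s ∈ J, (c s - b s) := by
  calc ∑ s, (if s ∈ J then c s else b s)
      = ∑ s, (b s + if s ∈ J then c s - b s else 0) :=
        sum_congr rfl fun s _ => by split_ifs <;> abel
    _ = ∑ s, b s + ∑ s ∈ J, (c s - b s) := by rw [sum_add_distrib, sum_ite_mem, univ_inter]

theorem ncard_setOf_sum_eq {b c : κ → F} (hbc : ∀ s, b s ≠ c s) (P : Finset κ → Prop) :
    {y : F | ∃ x : κ → F, (∀ s, x s = b s ∨ x s = c s) ∧ P {s | x s = c s} ∧ y = ∑ s, x s}.ncard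
      = #(({J | P J} : Finset (Finset κ)).image fun J => ∑ s ∈ J, (c s - b s)) := by
  have hset : {y : F | ∃ x : κ → F, (∀ s, x s = b s ∨ x s = c s) ∧ P {s | x s = c s} ∧
      y = ∑ s, x s} = (∑ s, b s + ·) '' ↑(({J | P J} : Finset (Finset κ)).image
        fun J => ∑ s ∈ J, (c s - b s)) := by
    ext y
    simp only [Set.mem_ofPred_eq, coe_image, coe_filter, mem_univ, true_and, Set.mem_image,
      exists_exists_and_eq_and]
    constructor
    · rintro ⟨x, hx, hP, rfl⟩
      refine ⟨_, hP, ?_⟩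
      rw [← sum_ite_mem_eq_add]
      refine sum_congr rfl fun s _ => ?_
      rcases hx s with h | h <;> simp [h, hbc s]
    · rintro ⟨J, hP, rfl⟩
      refine ⟨fun s => if s ∈ J then c s else b s, fun s => ?_, ?_,
        (sum_ite_mem_eq_add b c J).symm⟩
      · by_cases hs : s ∈ J <;> simp [hs]
      · convert hP
        ext s
        by_cases hs : s ∈ J <;> simp [hs, hbc s]
  rw [hset, Set.ncard_image_of_injective _ (add_right_injective _), Set.ncard_coe_finset]

theorem card_image_subtype_le [DecidableEq κ] (R : Finset κ) (u : κ → ℝ) (v : ℝ) (d : κ → F) :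
    #(({I | Int.fract (∑ s ∈ I, u s) = v} : Finset (Finset {s // s ∉ R})).image
      fun I : Finset {s // s ∉ R} => ∑ s ∈ I, d s) ≤
    #(({J | Int.fract (∑ s ∈ J, u s) = v} : Finset (Finset κ)).image fun J => ∑ s ∈ J, d s) := by
  refine card_le_card fun y hy => ?_
  simp only [mem_image, mem_filter, mem_univ, true_and] at hy ⊢
  obtain ⟨I, hI, rfl⟩ := hy
  exact ⟨I.map (Function.Embedding.subtype _), by simpa [sum_map] using hI, by simp [sum_map]⟩

end Sums

theorem natCast_factorial_ne_zero {F : Type*} [Field F] {k : ℕ}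
    (h : ringChar F = 0 ∨ k < ringChar F) : (k ! : F) ≠ 0 := by
  rw [Ne, ringChar.spec]
  rcases h with h | h
  · rw [h, zero_dvd_iff]
    exact Nat.factorial_ne_zero k
  · rw [((CharP.char_is_prime_or_zero F (ringChar F)).resolve_right (by omega)).dvd_factorial]
    omega

end SunCover

open Finset SunCover in
theorem sun_corollary2_1_general (k m : ℕ) (a0 : ℤ) (n0 : ℕ)
    (a : Fin k → ℤ) (n : Fin k → ℕ)
    -- `{a_s(n_s)}_{s=0}^k` is an `m`-cover of `ℤ`:
    (hcover : ∀ x : ℤ, m ≤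
      (Finset.univ.filter (fun s : Fin k => (n s : ℤ) ∣ x - a s)).card
        + (if (n0 : ℤ) ∣ x - a0 then 1 else 0))
    -- with `a₀(n₀)` essential (removing it destroys the `m`-cover property):
    (hess : ¬ ∀ x : ℤ, m ≤
      (Finset.univ.filter (fun s : Fin k => (n s : ℤ) ∣ x - a s)).card)
    (mm : Fin k → ℤ) (hmm : ∀ s, IsCoprime (mm s) (n s : ℤ))
    (F : Type*) [Field F]
    (hchar : ¬ (ringChar F ∣ Finset.univ.lcm n))
    (b c : Fin k → F) (hbc : ∀ s, b s ≠ c s) :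
    ∃ α : ℝ, 0 ≤ α ∧ α < 1 ∧ ∀ r : ℕ, r < n0 →
      (if ringChar F = 0 then m else min (ringChar F) m) ≤
        Set.ncard { y : F | ∃ x : Fin k → F,
          (∀ s, x s = b s ∨ x s = c s) ∧
          Int.fract (∑ s ∈ Finset.univ.filter (fun s => x s = c s),
            (mm s : ℝ) / (n s : ℝ)) = (α + r) / (n0 : ℝ) ∧
          y = ∑ s, x s } := by
  set m' := if ringChar F = 0 then m else min (ringChar F) m
  push Not at hess
  have hm : 0 < m := by
    obtain ⟨x, hx⟩ := hess
    omega
  obtain ⟨hm', hm'm, hfac⟩ : 0 < m' ∧ m' ≤ m ∧ ((m' - 1)! : F) ≠ 0 := by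
    by_cases h0 : ringChar F = 0
    · simp only [m', if_pos h0]
      exact ⟨hm, le_rfl, natCast_factorial_ne_zero (.inl h0)⟩
    · have hp := ((CharP.char_is_prime_or_zero F (ringChar F)).resolve_right h0).pos
      simp only [m', if_neg h0]
      exact ⟨lt_min hp hm, min_le_right _ _, natCast_factorial_ne_zero (.inr (by omega))⟩
  obtain ⟨R, hcoverR, hessR⟩ := exists_subsystem_cover (a := a) (n := n) hcover hess hm' hm'm
  have hN : ((univ.lcm fun s : {s // s ∉ R} => n s : ℕ) : F) ≠ 0 := by
    rw [Ne, ringChar.spec]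
    exact fun h => hchar (h.trans (lcm_dvd fun s _ => dvd_lcm (mem_univ _)))
  obtain ⟨α, hα₀, hα₁, hα⟩ := le_card_image hcoverR hessR (fun s => hmm s) hN
    (d := fun s => c s - b s) (fun s => sub_ne_zero.mpr (hbc s).symm) hfac
  refine ⟨α, hα₀, hα₁, fun r hr => ?_⟩
  rw [ncard_setOf_sum_eq hbc fun J => Int.fract (∑ s ∈ J, (mm s : ℝ) / n s) = (α + r) / n0]
  exact (hα r hr).trans (card_image_subtype_le R (fun s => (mm s : ℝ) / n s) _
    fun s => c s - b s)

/-- **Corollary 2.1** (Sun): Let `A₀ = {a_s(n_s)}_{s=0}^k` be an `m`-cover of `ℤ` with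
`a₀(n₀)` essential, let `m_s` be coprime to `n_s`, let `F` be a field of characteristic `p`
with `p ∤ lcm(n₁,…,n_k)`, and let `X_s = {b_s, c_s}` be two-element subsets of `F`.  Then
there is `α ∈ [0,1)` such that for each `0 ≤ r < n₀` the set
`{x₁+⋯+x_k : x_s ∈ X_s, {∑_{x_s = c_s} m_s/n_s} = (α+r)/n₀}` has at least `min{p', m}`
elements, where `p' = p` if `p` is prime and `p' = +∞` if `p = 0`. -/
theorem sun_corollary2_1 (k m : ℕ) (a0 : ℤ) (n0 : ℕ) (hn0 : 0 < n0)
    (a : Fin k → ℤ) (n : Fin k → ℕ) (hn : ∀ s, 0 < n s)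
    -- `{a_s(n_s)}_{s=0}^k` is an `m`-cover of `ℤ`:
    (hcover : ∀ x : ℤ, m ≤
      (Finset.univ.filter (fun s : Fin k => (n s : ℤ) ∣ x - a s)).card
        + (if (n0 : ℤ) ∣ x - a0 then 1 else 0))
    -- with `a₀(n₀)` essential (removing it destroys the `m`-cover property):
    (hess : ¬ ∀ x : ℤ, m ≤
      (Finset.univ.filter (fun s : Fin k => (n s : ℤ) ∣ x - a s)).card)
    (mm : Fin k → ℤ) (hmm : ∀ s, IsCoprime (mm s) (n s : ℤ))
    (F : Type*) [Field F]
    (hchar : ¬ (ringChar F ∣ Finset.univ.lcm n))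
    (b c : Fin k → F) (hbc : ∀ s, b s ≠ c s) :
    ∃ α : ℝ, 0 ≤ α ∧ α < 1 ∧ ∀ r : ℕ, r < n0 →
      (if ringChar F = 0 then m else min (ringChar F) m) ≤
        Set.ncard { y : F | ∃ x : Fin k → F,
          (∀ s, x s = b s ∨ x s = c s) ∧
          Int.fract (∑ s ∈ Finset.univ.filter (fun s => x s = c s),
            (mm s : ℝ) / (n s : ℝ)) = (α + r) / (n0 : ℝ) ∧
          y = ∑ s, x s } :=
  sun_corollary2_1_general k m a0 n0 a n hcover hess mm hmm F hchar b c hbc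
end
end

section
/- Let m ∈ ℕ and let A_0 = {a_s(n_s)}_{s=0}^k be an (m+1)-cover of ℤ with w_{A_0}(a_0) = m+1, and set J = {1 ≤ s ≤ k : a_0 ≡ a_s (mod n_s)} (so |J| = m). Let F be a field whose characteristic does not divide any of n_1,...,n_k, and for each s ∈ {1,...,k} let X_s ⊆ F with |X_s| = 2 and let c_s ∈ X_s. Let a_{ij}, b_i ∈ F for i ∈ {1,...,m}, j ∈ {1,...,k}, and let m_1,...,m_k be integers with gcd(m_s,n_s) = 1 for each s. If the permanent per(a_{ij})_{i∈{1,...,m}, j∈J} = ∑_{bijections i ↦ j_i from {1,...,m} onto J} a_{1 j_1}⋯a_{m j_m} is nonzero, then there exists α ∈ [0,1) such that for every r ∈ {0,1,...,n_0−1} there are x_1 ∈ X_1,...,x_k ∈ X_k with ∑_{j=1}^k a_{ij} x_j ≠ b_i for all i ∈ {1,...,m} and fractional part {∑_{1≤s≤k, x_s = c_s} m_s/n_s} = (α+r)/n_0. -/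
/-!
Put `N = ∏ n_s`, fix a primitive additive character `ψ` of `ZMod N` (it exists in an algebraic
closure of `F`, because `char F ∤ N`) and the weights `w_s = m_s N / n_s`, so that
`ψ (w_s y) = 1` exactly when `n_s ∣ y`. For `x ∈ ℤ` consider
`G(x) = ∑_{I ⊆ [1,k]} ∏_{s ∈ I} (-ψ (w_s (x - a_s))) · P(I)`, where `P(I)` is the value of
`∏_i (∑_j a_ij x_j - b_i)` at the point with `x_s = c_s` for `s ∈ I` and `x_s = b_s` otherwise.
Since `P` has degree `m` in the indicator of `I`, expanding it shows that `G(x) = 0` as soon as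
more than `m` of the numbers `-ψ (w_s (x - a_s))` equal `-1`, which by the covering property
happens whenever `x ≢ a_0 (mod n_0)`, whereas `G(a_0)` is a nonzero multiple of the permanent.
On the other hand `G(x) = ∑_θ f(θ) ψ(θ x)` with
`f(θ) = ∑_{∑_{s∈I} w_s = θ} (…)`, so the vanishing pattern of `G` forces
`f(θ - N/n_0) = ψ(a_0 N/n_0) f(θ)` by linear independence of characters. Hence the support of
`f` is a union of cosets of `⟨N/n_0⟩`, and any `I` contributing to `f(θ)` has `P(I) ≠ 0` and
`{∑_{s∈I} m_s/n_s} = θ/N`.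
-/

open scoped Classical

open Finset

section Expansion

variable {ι σ R : Type*} [Fintype ι] [DecidableEq ι] [DecidableEq σ] [CommRing R]

-- `p` picks one term of each factor of `∏ i, (v i + ∑ j ∈ E, B i j)`, `none` standing for `v i`;
-- `someRange p` is the set of the `j` it picks.
def someRange (p : ι → Option σ) : Finset σ := (univ.image p).eraseNone

omit [DecidableEq ι] in
lemma mem_someRange {p : ι → Option σ} {j : σ} : j ∈ someRange p ↔ ∃ i, p i = some j := by
  simp [someRange]

omit [DecidableEq ι] in
lemma card_someRange_le (p : ι → Option σ) : #(someRange p) ≤ Fintype.card ι :=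
  (card_eraseNone_le _).trans card_image_le

lemma someRange_subset_iff {p : ι → Option σ} {E : Finset σ} :
    someRange p ⊆ E ↔ p ∈ Fintype.piFinset fun _ => insertNone E := by
  simp only [subset_iff, mem_someRange, Fintype.mem_piFinset, mem_insertNone, Option.mem_def]
  grind

omit [DecidableEq σ] in
lemma prod_add_sum_eq_sum_piFinset (v : ι → R) (B : ι → σ → R) (E : Finset σ) :
    ∏ i, (v i + ∑ j ∈ E, B i j) =
      ∑ p ∈ Fintype.piFinset (fun _ => insertNone E), ∏ i, (p i).elim (v i) (B i) := by
  rw [sum_prod_piFinset (insertNone E) fun i o => o.elim (v i) (B i)]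
  simp [sum_insertNone]

lemma sum_powerset_filter_superset_prod (μ : σ → R) {T S : Finset σ} (h : T ⊆ S) :
    ∑ I ∈ S.powerset with T ⊆ I, ∏ s ∈ I, μ s = (∏ s ∈ T, μ s) * ∏ s ∈ S \ T, (1 + μ s) := by
  rw [prod_one_add, mul_sum]
  refine sum_bij' (fun I _ => I \ T) (fun D _ => T ∪ D) ?_ ?_ ?_ ?_ ?_
  · intro I hI
    simp only [mem_filter, mem_powerset] at hI ⊢
    exact sdiff_subset_sdiff hI.1 subset_rfl
  · intro D hD
    simp only [mem_filter, mem_powerset] at hD ⊢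
    exact ⟨union_subset h (hD.trans sdiff_subset), subset_union_left⟩
  · intro I hI
    exact union_sdiff_of_subset (mem_filter.1 hI).2
  · intro D hD
    exact union_sdiff_cancel_left (disjoint_of_subset_right (mem_powerset.1 hD) disjoint_sdiff)
  · intro I hI
    rw [← prod_union disjoint_sdiff, union_sdiff_of_subset (mem_filter.1 hI).2]

theorem sum_powerset_prod_mul_prod_add_sum (S : Finset σ) (μ : σ → R) (v : ι → R)
    (B : ι → σ → R) :
    ∑ I ∈ S.powerset, (∏ s ∈ I, μ s) * ∏ i, (v i + ∑ j ∈ I, B i j) =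
      ∑ p ∈ Fintype.piFinset (fun _ => insertNone S), (∏ i, (p i).elim (v i) (B i)) *
        ((∏ s ∈ someRange p, μ s) * ∏ s ∈ S \ someRange p, (1 + μ s)) := by
  simp_rw [prod_add_sum_eq_sum_piFinset, mul_sum]
  rw [sum_comm' (t' := Fintype.piFinset fun _ => insertNone S)
    (s' := fun p => S.powerset.filter (someRange p ⊆ ·))]
  · refine sum_congr rfl fun p hp => ?_
    rw [← someRange_subset_iff] at hp
    rw [← sum_powerset_filter_superset_prod μ hp, mul_sum]
    exact sum_congr rfl fun I _ => mul_comm _ _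
  · intro I p
    simp only [mem_powerset, mem_filter, ← someRange_subset_iff]
    exact ⟨fun ⟨hI, hp⟩ => ⟨⟨hI, hp⟩, hp.trans hI⟩, fun ⟨⟨hI, hp⟩, _⟩ => ⟨hI, hp⟩⟩

omit [Fintype ι] in
lemma prod_sdiff_one_add_eq_zero {μ : σ → R} {S T E : Finset σ} (hTS : T ⊆ S)
    (hT : ∀ s ∈ T, μ s = -1) (hE : ¬ T ⊆ E) : ∏ s ∈ S \ E, (1 + μ s) = 0 := by
  obtain ⟨t, ht, htE⟩ := not_subset.1 hE
  exact prod_eq_zero (mem_sdiff.2 ⟨hTS ht, htE⟩) (by rw [hT t ht, add_neg_cancel])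

theorem sum_powerset_prod_mul_prod_add_sum_eq_zero {μ : σ → R} {S T : Finset σ} (hTS : T ⊆ S)
    (hT : ∀ s ∈ T, μ s = -1) (hcard : Fintype.card ι < #T) (v : ι → R) (B : ι → σ → R) :
    ∑ I ∈ S.powerset, (∏ s ∈ I, μ s) * ∏ i, (v i + ∑ j ∈ I, B i j) = 0 := by
  rw [sum_powerset_prod_mul_prod_add_sum]
  refine sum_eq_zero fun p _ => ?_
  have hTp : ¬ T ⊆ someRange p := fun h =>
    ((card_le_card h).trans (card_someRange_le p)).not_gt hcard
  rw [prod_sdiff_one_add_eq_zero hTS hT hTp, mul_zero, mul_zero]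

omit [DecidableEq ι] in
lemma exists_equiv_of_someRange_eq {p : ι → Option σ} {T : Finset σ} (h : someRange p = T)
    (hcard : #T = Fintype.card ι) : ∃ e : ι ≃ T, ∀ i, p i = some (e i) := by
  subst h
  have hsome : ∀ i, (p i).isSome := by
    intro i
    by_contra hi
    have hnone : none ∈ univ.image p := mem_image.2 ⟨i, mem_univ _, by simpa using hi⟩
    have hcard_erase := card_eraseNone_of_mem hnone
    have hcard_image := (card_image_le (s := univ) (f := p)).trans_eq (card_univ (α := ι))
    have hι := Fintype.card_pos_iff.2 ⟨i⟩
    simp only [someRange] at hcard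
    omega
  let g : ι → someRange p := fun i => ⟨(p i).get (hsome i), mem_someRange.2 ⟨i, by simp⟩⟩
  have hg : g.Surjective := by
    rintro ⟨j, hj⟩
    obtain ⟨i, hi⟩ := mem_someRange.1 hj
    exact ⟨i, Subtype.ext (by simp [g, hi])⟩
  have hgb : g.Bijective := (Fintype.bijective_iff_surjective_and_card g).2 ⟨hg, by simp [hcard]⟩
  exact ⟨Equiv.ofBijective g hgb, fun i => by simp [g]⟩

theorem sum_powerset_prod_mul_prod_add_sum_eq_sum_equiv {μ : σ → R} {S T : Finset σ} (hTS : T ⊆ S)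
    (hT : ∀ s ∈ T, μ s = -1) (hcard : #T = Fintype.card ι) (v : ι → R) (B : ι → σ → R) :
    ∑ I ∈ S.powerset, (∏ s ∈ I, μ s) * ∏ i, (v i + ∑ j ∈ I, B i j) =
      (-1) ^ #T * (∏ s ∈ S \ T, (1 + μ s)) * ∑ e : ι ≃ T, ∏ i, B i (e i) := by
  -- only the monomials `p` using every `j ∈ T` survive, and these are the bijections `ι ≃ T`
  rw [sum_powerset_prod_mul_prod_add_sum, ← sum_filter_of_ne (p := fun p => someRange p = T)]
  · have hμT : ∏ s ∈ T, μ s = (-1) ^ #T := prod_eq_pow_card hT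
    rw [sum_congr rfl fun p hp => by rw [(mem_filter.1 hp).2, hμT], ← sum_mul, mul_comm]
    congr 1
    symm
    refine sum_bij (fun e _ i => some (e i : σ)) ?_ ?_ ?_ fun e _ => rfl
    · intro e _
      have he : someRange (fun i => some (e i : σ)) = T := by
        ext j
        simp only [mem_someRange, Option.some.injEq]
        exact ⟨fun ⟨i, hi⟩ => hi ▸ (e i).2, fun hj => ⟨e.symm ⟨j, hj⟩, by simp⟩⟩
      exact mem_filter.2 ⟨someRange_subset_iff.1 (he.subset.trans hTS), he⟩
    · intro e₁ _ e₂ _ h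
      exact Equiv.ext fun i => Subtype.ext (Option.some_injective _ (congrFun h i))
    · intro p hp
      obtain ⟨e, he⟩ := exists_equiv_of_someRange_eq (mem_filter.1 hp).2 hcard
      exact ⟨e, mem_univ _, funext fun i => (he i).symm⟩
  · intro p _ hp
    have hTp : T ⊆ someRange p := by
      by_contra h
      exact hp (by rw [prod_sdiff_one_add_eq_zero hTS hT h, mul_zero, mul_zero])
    exact (eq_of_subset_of_card_le hTp ((card_someRange_le p).trans hcard.ge)).symm

theorem sum_powerset_prod_mul_prod_add_sum_ne_zero {μ : σ → R} {S T : Finset σ} [IsDomain R]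
    (hTS : T ⊆ S) (hT : ∀ s ∈ S, μ s = -1 ↔ s ∈ T) (hcard : #T = Fintype.card ι) (v : ι → R)
    (B : ι → σ → R) (hB : ∑ e : ι ≃ T, ∏ i, B i (e i) ≠ 0) :
    ∑ I ∈ S.powerset, (∏ s ∈ I, μ s) * ∏ i, (v i + ∑ j ∈ I, B i j) ≠ 0 := by
  rw [sum_powerset_prod_mul_prod_add_sum_eq_sum_equiv hTS (fun s hs => (hT s (hTS hs)).2 hs)
    hcard]
  refine mul_ne_zero (mul_ne_zero (pow_ne_zero _ (neg_ne_zero.2 one_ne_zero))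
    (prod_ne_zero_iff.2 fun s hs h => ?_)) hB
  obtain ⟨hsS, hsT⟩ := mem_sdiff.1 hs
  exact hsT ((hT s hsS).1 (eq_neg_of_add_eq_zero_right h))

end Expansion

section Fourier

variable {N : ℕ} [NeZero N] {L : Type*} [Field L] {ψ : AddChar (ZMod N) L}

lemma AddChar.IsPrimitive.eq_of_forall_sum_mul_eq (hψ : ψ.IsPrimitive) {f g : ZMod N → L}
    (h : ∀ x, ∑ θ, f θ * ψ (θ * x) = ∑ θ, g θ * ψ (θ * x)) : f = g := by
  have hinj : Function.Injective fun θ : ZMod N => (ψ.mulShift θ).toMonoidHom := by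
    intro θ θ' hθ
    have h1 : ψ θ = ψ θ' := by simpa using congrArg (· (Multiplicative.ofAdd 1)) hθ
    rw [← sub_eq_zero, ← hψ.zmod_char_eq_one_iff, AddChar.map_sub_eq_div, h1,
      div_self (ψ.val_isUnit θ').ne_zero]
  have hli := (linearIndependent_monoidHom (Multiplicative (ZMod N)) L).comp _ hinj
  funext θ
  rw [← sub_eq_zero]
  refine Fintype.linearIndependent_iff.1 hli (f - g) ?_ θ
  funext x
  simpa [sub_mul, sum_sub_distrib, sub_eq_zero] using h (Multiplicative.toAdd x)

lemma AddChar.IsPrimitive.sub_eq_mul_of_forall_mul_eq (hψ : ψ.IsPrimitive) {f : ZMod N → L}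
    {M : ZMod N} {c : L}
    (h : ∀ x, ψ (M * x) * ∑ θ, f θ * ψ (θ * x) = c * ∑ θ, f θ * ψ (θ * x)) (θ : ZMod N) :
    f (θ - M) = c * f θ := by
  refine congrFun (hψ.eq_of_forall_sum_mul_eq (f := fun θ => f (θ - M))
    (g := fun θ => c * f θ) fun x => ?_) θ
  calc ∑ θ, f (θ - M) * ψ (θ * x)
      = ∑ θ, f θ * ψ ((θ + M) * x) :=
        (Fintype.sum_equiv (Equiv.addRight M) _ _ fun θ => by simp).symm
    _ = ψ (M * x) * ∑ θ, f θ * ψ (θ * x) := by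
        simp_rw [mul_sum, add_mul, AddChar.map_add_eq_mul]
        exact sum_congr rfl fun _ _ => by ring
    _ = ∑ θ, c * f θ * ψ (θ * x) := by simp_rw [h x, mul_sum, mul_assoc]

omit [NeZero N] in
lemma ne_zero_add_intCast_mul {f : ZMod N → L} {M : ZMod N} {c : L} (hc : c ≠ 0)
    (hf : ∀ θ, f (θ - M) = c * f θ) {θ : ZMod N} (hθ : f θ ≠ 0) (z : ℤ) :
    f (θ + z * M) ≠ 0 := by
  induction z using Int.induction_on with
  | zero => simpa using hθ
  | succ z ih =>
    intro h0
    apply ih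
    have := hf (θ + (z + 1 : ℤ) * M)
    push_cast at this h0 ⊢
    rw [show θ + (z + 1) * M - M = θ + z * M by ring, h0, mul_zero] at this
    exact this
  | pred z ih =>
    have := hf (θ + (-z : ℤ) * M)
    push_cast at this ih ⊢
    rw [show θ + -(z : ZMod N) * M - M = θ + (-z - 1) * M by ring] at this
    rw [this]
    exact mul_ne_zero hc ih

lemma AddChar.IsPrimitive.sub_eq_mul_of_forall_sum_eq_zero (hψ : ψ.IsPrimitive)
    {f : ZMod N → L} {n0 M : ℕ} (hM : N = n0 * M) {a0 : ℤ}
    (hvanish : ∀ x : ℤ, ¬ (n0 : ℤ) ∣ x - a0 → ∑ θ, f θ * ψ (θ * x) = 0) (θ : ZMod N) :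
    f (θ - M) = ψ (M * a0) * f θ := by
  refine hψ.sub_eq_mul_of_forall_mul_eq (fun x => ?_) θ
  by_cases hx : (n0 : ℤ) ∣ (x.val : ℤ) - a0
  · obtain ⟨t, ht⟩ := hx
    have : ((M * ((x.val : ℤ) - a0) : ℤ) : ZMod N) = 0 := by
      rw [ZMod.intCast_zmod_eq_zero_iff_dvd, ht, hM]
      exact ⟨t, by push_cast; ring⟩
    have hMx : (M : ZMod N) * x = M * a0 := by
      rw [← ZMod.natCast_zmod_val x, ← sub_eq_zero]
      simpa [mul_sub] using this
    rw [hMx]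
  · have := hvanish x.val hx
    rw [Int.cast_natCast, ZMod.natCast_zmod_val] at this
    rw [this, mul_zero, mul_zero]

lemma exists_progression_of_sub_eq_mul {f : ZMod N → L} {n0 M : ℕ} (hM : N = n0 * M)
    (hn0 : 0 < n0) {c : L} (hc : c ≠ 0) (hf : ∀ θ, f (θ - M) = c * f θ) {θ0 : ZMod N}
    (hθ0 : f θ0 ≠ 0) :
    ∃ α : ℝ, 0 ≤ α ∧ α < 1 ∧ ∀ r < n0, ∃ θ, f θ ≠ 0 ∧ (θ.val : ℝ) / N = (α + r) / n0 := by
  have hMpos : 0 < M := Nat.pos_of_ne_zero fun h => NeZero.ne N (by simp [hM, h])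
  obtain ⟨ρ, q, hρ, hθ0ρ⟩ : ∃ ρ q, ρ < M ∧ θ0 = ((ρ + M * q : ℕ) : ZMod N) :=
    ⟨θ0.val % M, θ0.val / M, Nat.mod_lt _ hMpos, by rw [Nat.mod_add_div, ZMod.natCast_zmod_val]⟩
  refine ⟨ρ / M, by positivity, ?_, fun r hr => ⟨((ρ + r * M : ℕ) : ZMod N), ?_, ?_⟩⟩
  · rw [div_lt_one (by exact_mod_cast hMpos)]
    exact_mod_cast hρ
  · have hθ : ((ρ + r * M : ℕ) : ZMod N) = θ0 + ((r - q : ℤ) : ZMod N) * M := by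
      rw [hθ0ρ]
      push_cast
      ring
    rw [hθ]
    exact ne_zero_add_intCast_mul hc hf hθ0 _
  · have hlt : ρ + r * M < N := by
      rw [hM]
      nlinarith
    have hNM : (N : ℝ) = n0 * M := by exact_mod_cast hM
    have : (M : ℝ) ≠ 0 := by exact_mod_cast hMpos.ne'
    have : (n0 : ℝ) ≠ 0 := by exact_mod_cast hn0.ne'
    rw [ZMod.val_natCast_of_lt hlt, hNM]
    push_cast
    field_simp

theorem AddChar.IsPrimitive.exists_progression_of_forall_sum_eq_zero (hψ : ψ.IsPrimitive)
    {f : ZMod N → L} {n0 : ℕ} (hn0 : 0 < n0) (a0 : ℤ)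
    (hvanish : ∀ x : ℤ, ¬ (n0 : ℤ) ∣ x - a0 → ∑ θ, f θ * ψ (θ * x) = 0)
    (hne : ∑ θ, f θ * ψ (θ * a0) ≠ 0) :
    ∃ α : ℝ, 0 ≤ α ∧ α < 1 ∧ ∀ r < n0, ∃ θ, f θ ≠ 0 ∧ (θ.val : ℝ) / N = (α + r) / n0 := by
  -- `a0 + N` and `a0` have the same image in `ZMod N`
  obtain ⟨M, hM⟩ : n0 ∣ N := by
    by_contra hnd
    refine hne ?_
    simpa using hvanish (a0 + N) (by simpa [Int.natCast_dvd_natCast] using hnd)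
  obtain ⟨θ0, -, hθ0⟩ := exists_ne_zero_of_sum_ne_zero hne
  exact exists_progression_of_sub_eq_mul hM hn0 (ψ.val_isUnit _).ne_zero
    (hψ.sub_eq_mul_of_forall_sum_eq_zero hM hvanish) (left_ne_zero_of_mul hθ0)

end Fourier

lemma AddChar.map_sum_eq_prod {A M ι : Type*} [AddCommMonoid A] [CommMonoid M] (ψ : AddChar A M)
    (s : Finset ι) (f : ι → A) : ψ (∑ i ∈ s, f i) = ∏ i ∈ s, ψ (f i) := by
  induction s using Finset.cons_induction with
  | empty => simp
  | cons i s hi ih => rw [sum_cons, prod_cons, AddChar.map_add_eq_mul, ih]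

section CoveringSum

variable {N : ℕ} [NeZero N] {L : Type*} [Field L] {ψ : AddChar (ZMod N) L}
  {σ ι : Type*} [Fintype σ] [DecidableEq σ] [Fintype ι] [DecidableEq ι]

omit [Fintype σ] [DecidableEq σ] [DecidableEq ι] in
lemma sum_powerset_prod_char_mul_eq (S : Finset σ) (w a : σ → ZMod N)
    (q : Finset σ → L) (x : ZMod N) :
    ∑ I ∈ S.powerset, (∏ s ∈ I, -ψ (w s * (x - a s))) * q I =
      ∑ θ, (∑ I ∈ S.powerset with ∑ s ∈ I, w s = θ, (∏ s ∈ I, -ψ (-(w s * a s))) * q I) *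
        ψ (θ * x) := by
  simp_rw [sum_mul]
  rw [← sum_fiberwise S.powerset (fun I => ∑ s ∈ I, w s)]
  refine sum_congr rfl fun θ _ => sum_congr rfl fun I hI => ?_
  rw [← (mem_filter.1 hI).2, sum_mul, AddChar.map_sum_eq_prod, mul_right_comm, ← prod_mul_distrib]
  congr 1
  refine prod_congr rfl fun s _ => ?_
  rw [neg_mul, ← AddChar.map_add_eq_mul]
  ring_nf

theorem AddChar.IsPrimitive.exists_progression_of_cover (hψ : ψ.IsPrimitive) {n : σ → ℕ}
    {a : σ → ℤ} {w : σ → ZMod N} (hw : ∀ s (y : ℤ), ψ (w s * y) = 1 ↔ (n s : ℤ) ∣ y)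
    {n0 : ℕ} (hn0 : 0 < n0) (a0 : ℤ)
    (hcover : ∀ x : ℤ, ¬ (n0 : ℤ) ∣ x - a0 → Fintype.card ι < #{s | (n s : ℤ) ∣ x - a s})
    (hJ : #{s | (n s : ℤ) ∣ a0 - a s} = Fintype.card ι) (u : ι → L) (B : ι → σ → L)
    (hper : ∑ e : ι ≃ {s // (n s : ℤ) ∣ a0 - a s}, ∏ i, B i (e i) ≠ 0) :
    ∃ α : ℝ, 0 ≤ α ∧ α < 1 ∧ ∀ r < n0, ∃ I : Finset σ,
      ∏ i, (u i + ∑ j ∈ I, B i j) ≠ 0 ∧ ((∑ s ∈ I, w s).val : ℝ) / N = (α + r) / n0 := by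
  set μ : ℤ → σ → L := fun x s => -ψ (w s * ((x : ZMod N) - a s))
  have hμ : ∀ x s, μ x s = -1 ↔ (n s : ℤ) ∣ x - a s := fun x s => by
    rw [← hw, neg_inj]
    push_cast
    rfl
  set G : ℤ → L := fun x => ∑ I ∈ univ.powerset, (∏ s ∈ I, μ x s) * ∏ i, (u i + ∑ j ∈ I, B i j)
  have hvanish : ∀ x, ¬ (n0 : ℤ) ∣ x - a0 → G x = 0 := fun x hx =>
    sum_powerset_prod_mul_prod_add_sum_eq_zero (subset_univ _)
      (fun s hs => (hμ x s).2 (mem_filter.1 hs).2) (hcover x hx) u B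
  have hne : G a0 ≠ 0 := by
    set T : Finset σ := {s | (n s : ℤ) ∣ a0 - a s}
    let E : (ι ≃ T) ≃ (ι ≃ {s // (n s : ℤ) ∣ a0 - a s}) :=
      Equiv.equivCongr (Equiv.refl ι) (Equiv.subtypeEquivRight fun s => by simp [T])
    exact sum_powerset_prod_mul_prod_add_sum_ne_zero (subset_univ T) (fun s _ => by simp [T, hμ])
      hJ u B ((Fintype.sum_equiv E _ _ fun e => rfl).trans_ne hper)
  have hG : ∀ x : ℤ, G x = ∑ θ, (∑ I ∈ univ.powerset with ∑ s ∈ I, w s = θ,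
      (∏ s ∈ I, -ψ (-(w s * a s))) * ∏ i, (u i + ∑ j ∈ I, B i j)) * ψ (θ * x) :=
    fun x => sum_powerset_prod_char_mul_eq _ _ _ _ _
  obtain ⟨α, hα0, hα1, hα⟩ := hψ.exists_progression_of_forall_sum_eq_zero hn0 a0
    (fun x hx => hG x ▸ hvanish x hx) (hG a0 ▸ hne)
  refine ⟨α, hα0, hα1, fun r hr => ?_⟩
  obtain ⟨θ, hθ, hθα⟩ := hα r hr
  obtain ⟨I, hI, hIθ⟩ := exists_ne_zero_of_sum_ne_zero hθ
  exact ⟨I, right_ne_zero_of_mul hIθ, (mem_filter.1 hI).2 ▸ hθα⟩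

end CoveringSum

lemma exists_isPrimitive_addChar (F : Type*) [Field F] (N : ℕ) [NeZero N] [NeZero (N : F)] :
    ∃ ψ : AddChar (ZMod N) (AlgebraicClosure F), ψ.IsPrimitive :=
  have ⟨_, hζ⟩ := HasEnoughRootsOfUnity.exists_primitiveRoot (AlgebraicClosure F) N
  ⟨_, AddChar.zmodChar_primitive_of_primitive_root N hζ⟩

lemma AddChar.IsPrimitive.apply_mul_eq_one_iff {N : ℕ} [NeZero N] {L : Type*} [CommMonoid L]
    {ψ : AddChar (ZMod N) L} (hψ : ψ.IsPrimitive) {n : ℕ} (hn : n ∣ N) {k : ℤ}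
    (hk : IsCoprime k n) (y : ℤ) :
    ψ (((k * (N / n : ℕ) : ℤ) : ZMod N) * y) = 1 ↔ (n : ℤ) ∣ y := by
  obtain ⟨q, hNq⟩ := hn
  have hq : q ≠ 0 := by rintro rfl; exact NeZero.ne N (by simpa using hNq)
  have hn0 : 0 < n := Nat.pos_of_ne_zero (by rintro rfl; exact NeZero.ne N (by simpa using hNq))
  have hdiv : N / n = q := by rw [hNq, Nat.mul_div_cancel_left q hn0]
  rw [← Int.cast_mul, hψ.zmod_char_eq_one_iff, ZMod.intCast_zmod_eq_zero_iff_dvd, hdiv,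
    show (N : ℤ) = n * q by exact_mod_cast hNq, mul_right_comm,
    mul_dvd_mul_iff_right (by exact_mod_cast hq)]
  exact ⟨hk.symm.dvd_of_dvd_mul_left, fun h => h.mul_left k⟩

lemma Int.fract_sum_div_eq_val {σ : Type*} (I : Finset σ) {N : ℕ} [NeZero N] {n : σ → ℕ}
    (hn : ∀ s ∈ I, n s ∣ N) (k : σ → ℤ) :
    Int.fract (∑ s ∈ I, (k s : ℝ) / n s) =
      ((∑ s ∈ I, ((k s * (N / n s : ℕ) : ℤ) : ZMod N)).val : ℝ) / N := by
  have hterm : ∀ s ∈ I, (k s : ℝ) / n s = ((k s * (N / n s : ℕ) : ℤ) : ℝ) / N := by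
    intro s hs
    obtain ⟨q, hNq⟩ := hn s hs
    have hn0 : 0 < n s :=
      Nat.pos_of_ne_zero (by intro h; exact NeZero.ne N (by simp [hNq, h]))
    have hq : (q : ℝ) ≠ 0 := by
      rintro h
      exact NeZero.ne N (by simp [hNq, show q = 0 by exact_mod_cast h])
    rw [hNq, Nat.mul_div_cancel_left q hn0]
    push_cast
    field_simp
  rw [sum_congr rfl hterm, ← sum_div, ← Int.cast_sum, Int.fract_div_intCast_eq_div_intCast_mod,
    ← Int.cast_sum, ← ZMod.val_intCast, Int.cast_natCast]

lemma natCast_prod_ne_zero {σ F : Type*} [Fintype σ] [Field F] {n : σ → ℕ}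
    (h : ∀ s, ¬ ringChar F ∣ n s) : ((∏ s, n s : ℕ) : F) ≠ 0 := by
  rw [Nat.cast_prod, prod_ne_zero_iff]
  exact fun s _ => (ringChar.spec F (n s)).not.2 (h s)

lemma sum_equiv_prod_map_mul_ne_zero {ι κ F L : Type*} [Fintype ι] [Fintype κ] [DecidableEq ι]
    [DecidableEq κ] [Field F] [Field L] (φ : F →+* L) {A : ι → κ → F} {d : κ → F}
    (hd : ∀ j, d j ≠ 0) (hA : ∑ e : ι ≃ κ, ∏ i, A i (e i) ≠ 0) :
    ∑ e : ι ≃ κ, ∏ i, φ (A i (e i) * d (e i)) ≠ 0 := by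
  have h : ∑ e : ι ≃ κ, ∏ i, A i (e i) * d (e i) = (∏ j, d j) * ∑ e : ι ≃ κ, ∏ i, A i (e i) := by
    rw [mul_sum]
    exact sum_congr rfl fun e _ => by rw [prod_mul_distrib, e.prod_comp d, mul_comm]
  simp_rw [← map_prod, ← map_sum, h]
  exact (map_ne_zero φ).2 (mul_ne_zero (prod_ne_zero_iff.2 fun j _ => hd j) hA)

lemma sum_mul_piecewise {σ R : Type*} [Fintype σ] [DecidableEq σ] [CommRing R] (I : Finset σ)
    (A b c : σ → R) :
    ∑ j, A j * I.piecewise c b j = ∑ j, A j * b j + ∑ j ∈ I, A j * (c j - b j) := by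
  have h : ∀ j, A j * I.piecewise c b j = A j * b j + if j ∈ I then A j * (c j - b j) else 0 := by
    intro j
    by_cases hj : j ∈ I <;> simp [hj]
    ring
  rw [sum_congr rfl fun j _ => h j, sum_add_distrib, sum_ite_mem, univ_inter]

lemma filter_piecewise_eq_right {σ α : Type*} [Fintype σ] [DecidableEq σ] {b c : σ → α}
    (hbc : ∀ s, b s ≠ c s) (I : Finset σ) [DecidablePred fun s => I.piecewise c b s = c s] :
    univ.filter (fun s => I.piecewise c b s = c s) = I := by
  ext s
  by_cases h : s ∈ I <;> simp [h, hbc s]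

/-- **Corollary 2.3** (Sun): Let `A₀ = {a_s(n_s)}_{s=0}^k` be an `(m+1)`-cover of `ℤ` with
`w_{A₀}(a₀) = m+1`, and let `J = {1 ≤ s ≤ k : a₀ ≡ a_s (mod n_s)}`.  Let `F` be a field
whose characteristic divides none of `n₁,…,n_k`, let `X_s = {b_s, c_s}` be two-element
subsets of `F`, let `a_{ij}, b_i ∈ F`, and let `m_s` be coprime to `n_s`.  If the permanent
`per(a_{ij})_{i∈[1,m], j∈J} ≠ 0`, then the set
`{{∑_{x_s = c_s} m_s/n_s} : x_s ∈ X_s, ∑_j a_{ij} x_j ≠ b_i for all i}` contains an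
arithmetic progression of length `n₀` with common difference `1/n₀`. -/
theorem sun_corollary2_3 (k m : ℕ) (a0 : ℤ) (n0 : ℕ) (hn0 : 0 < n0)
    (a : Fin k → ℤ) (n : Fin k → ℕ) (hn : ∀ s, 0 < n s)
    -- `{a_s(n_s)}_{s=0}^k` is an `(m+1)`-cover of `ℤ`:
    (hcover : ∀ x : ℤ, m + 1 ≤
      (Finset.univ.filter (fun s : Fin k => (n s : ℤ) ∣ x - a s)).card
        + (if (n0 : ℤ) ∣ x - a0 then 1 else 0))
    -- with `w_{A₀}(a₀) = m + 1`:
    (hw0 : (Finset.univ.filter (fun s : Fin k => (n s : ℤ) ∣ a0 - a s)).card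
        + (if (n0 : ℤ) ∣ a0 - a0 then 1 else 0) = m + 1)
    (F : Type*) [Field F]
    (hchar : ∀ s, ¬ (ringChar F ∣ n s))
    (b c : Fin k → F) (hbc : ∀ s, b s ≠ c s)
    (A : Fin m → Fin k → F) (bv : Fin m → F)
    (mm : Fin k → ℤ) (hmm : ∀ s, IsCoprime (mm s) (n s : ℤ))
    -- the permanent over all bijections from `[1,m]` onto `J` is nonzero:
    (hper : ∑ e : Fin m ≃ {s : Fin k // (n s : ℤ) ∣ a0 - a s},
      ∏ i, A i (e i : Fin k) ≠ 0) :
    ∃ α : ℝ, 0 ≤ α ∧ α < 1 ∧ ∀ r : ℕ, r < n0 → ∃ x : Fin k → F,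
      (∀ s, x s = b s ∨ x s = c s) ∧
      (∀ i, ∑ j, A i j * x j ≠ bv i) ∧
      Int.fract (∑ s ∈ Finset.univ.filter (fun s => x s = c s),
        (mm s : ℝ) / (n s : ℝ)) = (α + r) / (n0 : ℝ) := by
  let N := ∏ s, n s
  have hnN : ∀ s, n s ∣ N := fun s => dvd_prod_of_mem n (mem_univ s)
  have : NeZero N := ⟨(prod_pos fun s _ => hn s).ne'⟩
  have : NeZero (N : F) := ⟨natCast_prod_ne_zero hchar⟩
  obtain ⟨ψ, hψ⟩ := exists_isPrimitive_addChar F N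
  let φ := algebraMap F (AlgebraicClosure F)
  obtain ⟨α, hα0, hα1, hα⟩ := hψ.exists_progression_of_cover
    (w := fun s => ((mm s * (N / n s : ℕ) : ℤ) : ZMod N))
    (fun s => hψ.apply_mul_eq_one_iff (hnN s) (hmm s)) hn0 a0
    (fun x hx => by
      simpa only [if_neg hx, add_zero, Fintype.card_fin, Nat.add_one_le_iff] using hcover x)
    (by simpa using hw0)
    (fun i => φ (∑ j, A i j * b j - bv i)) (fun i j => φ (A i j * (c j - b j)))
    (sum_equiv_prod_map_mul_ne_zero φ (A := fun i (j : {s // (n s : ℤ) ∣ a0 - a s}) => A i j)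
      (d := fun j => c j - b j) (fun j => sub_ne_zero.2 (hbc j).symm) hper)
  refine ⟨α, hα0, hα1, fun r hr => ?_⟩
  obtain ⟨I, hI, hIα⟩ := hα r hr
  refine ⟨I.piecewise c b, fun s => ?_, fun i h => prod_ne_zero_iff.1 hI i (mem_univ i) ?_, ?_⟩
  · by_cases h : s ∈ I <;> simp [h]
  · rw [← map_sum, ← map_add, sub_add_eq_add_sub, ← sum_mul_piecewise, h, sub_self, map_zero]
  · rw [filter_piecewise_eq_right hbc I, Int.fract_sum_div_eq_val I (fun s _ => hnN s), hIα]
end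

section
/- Let n > 1 be an integer, and let m_1,...,m_{n−1} be integers each relatively prime to n. Then the set { ∑_{s∈I} m_s : I ⊆ {1,...,n−1} } contains a complete system of residues modulo n; that is, for every c ∈ ℤ/nℤ there exists I ⊆ {1,...,n−1} with ∑_{s∈I} m_s ≡ c (mod n). In particular, for any prime p and any c_1,...,c_{p−1} ∈ ℤ/pℤ \ {0}, there exists I ⊆ {1,...,p−1} with ∑_{s∈I} c_s = 1. -/
/-!
Units of `ZMod n` generate it additively. Add such generators one at a time: the subset sums
always contain `0`, and a nonempty set closed under adding a generator of `G` is all of `G`, so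
until the subset sums fill `G`, each new generator `v` moves some subset sum `x` to a new one
`x + v`. Hence `|G| - 1` generators already give `|G|` distinct subset sums.
-/

open Finset

theorem ZMod.multiples_eq_top_of_isUnit {n : ℕ} [NeZero n] {v : ZMod n} (hv : IsUnit v) :
    AddSubmonoid.multiples v = ⊤ := by
  refine eq_top_iff.mpr fun x _ => ⟨(x * v⁻¹).val, ?_⟩
  change _ • v = x
  rw [nsmul_eq_mul, ZMod.natCast_zmod_val, mul_assoc, ZMod.inv_mul_of_unit v hv, mul_one]

variable {G : Type*} [AddCommGroup G]

theorem Finset.eq_univ_of_add_mem_of_multiples_eq_top [Fintype G] {S : Finset G}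
    (hS : S.Nonempty) {v : G} (hv : AddSubmonoid.multiples v = ⊤)
    (hadd : ∀ x ∈ S, x + v ∈ S) : S = univ := by
  obtain ⟨a, ha⟩ := hS
  have hiter : ∀ k : ℕ, a + k • v ∈ S := by
    intro k
    induction k with
    | zero => simpa using ha
    | succ k ih => simpa [succ_nsmul, add_assoc] using hadd _ ih
  refine eq_univ_of_forall fun x => ?_
  obtain ⟨k, hk⟩ : x - a ∈ AddSubmonoid.multiples v := hv ▸ AddSubmonoid.mem_top (x - a)
  simpa [hk] using hiter k

variable [DecidableEq G]

def subsetSums {ι : Type*} (u : ι → G) (s : Finset ι) : Finset G :=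
  s.powerset.image fun I => ∑ i ∈ I, u i

variable {ι : Type*} [DecidableEq ι]

theorem subsetSums_insert (u : ι → G) {s : Finset ι} {a : ι} (ha : a ∉ s) :
    subsetSums u (insert a s) = subsetSums u s ∪ (subsetSums u s).image (· + u a) := by
  simp only [subsetSums, powerset_insert, image_union, image_image]
  congr 1
  refine image_congr fun I hI => ?_
  simp only [Function.comp_apply]
  rw [sum_insert (fun h => ha (mem_powerset.mp hI h)), add_comm]

theorem min_card_le_card_subsetSums [Fintype G] (u : ι → G)
    (hu : ∀ i, AddSubmonoid.multiples (u i) = ⊤) (s : Finset ι) :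
    min (Fintype.card G) (#s + 1) ≤ #(subsetSums u s) := by
  induction s using Finset.induction_on with
  | empty => simp [subsetSums]
  | insert a s ha ih =>
    rw [subsetSums_insert u ha, card_insert_of_notMem ha]
    by_cases htop : subsetSums u s = univ
    · simp [htop]
    have hzero : (0 : G) ∈ subsetSums u s := mem_image.mpr ⟨∅, empty_mem_powerset s, sum_empty⟩
    obtain ⟨x, hx, hxa⟩ : ∃ x ∈ subsetSums u s, x + u a ∉ subsetSums u s := by
      by_contra! h
      exact htop (eq_univ_of_add_mem_of_multiples_eq_top ⟨0, hzero⟩ (hu a) h)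
    have hlt : #(subsetSums u s) < #(subsetSums u s ∪ (subsetSums u s).image (· + u a)) :=
      card_lt_card (ssubset_iff_of_subset subset_union_left |>.mpr
        ⟨x + u a, mem_union_right _ (mem_image_of_mem _ hx), hxa⟩)
    omega

theorem subsetSums_univ_eq_univ [Fintype G] [Fintype ι] (u : ι → G)
    (hu : ∀ i, AddSubmonoid.multiples (u i) = ⊤) (hcard : Fintype.card G ≤ Fintype.card ι + 1) :
    subsetSums u univ = univ :=
  eq_univ_of_card _ <| le_antisymm (card_le_univ _) <| by
    simpa [hcard] using min_card_le_card_subsetSums u hu univ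

theorem exists_subset_sum_eq [Fintype G] [Fintype ι] (u : ι → G)
    (hu : ∀ i, AddSubmonoid.multiples (u i) = ⊤) (hcard : Fintype.card G ≤ Fintype.card ι + 1)
    (c : G) : ∃ I : Finset ι, ∑ i ∈ I, u i = c := by
  obtain ⟨I, -, hI⟩ := mem_image.mp (subsetSums_univ_eq_univ u hu hcard ▸ mem_univ c)
  exact ⟨I, hI⟩

theorem ZMod.exists_subset_sum_eq_of_isUnit {n : ℕ} [NeZero n] (u : Fin (n - 1) → ZMod n)
    (hu : ∀ i, IsUnit (u i)) (c : ZMod n) : ∃ I : Finset (Fin (n - 1)), ∑ i ∈ I, u i = c :=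
  exists_subset_sum_eq u (fun i => ZMod.multiples_eq_top_of_isUnit (hu i))
    (by simp only [ZMod.card, Fintype.card_fin]; omega) c

/-- Let `n > 1` and let `m₁,…,m_{n-1}` be integers coprime to `n`.  Then the subset sums
`∑_{s∈I} m_s` (`I ⊆ {1,…,n-1}`) contain a complete system of residues modulo `n`.
In particular, for any prime `p` and any nonzero `c₁,…,c_{p-1} ∈ ℤ/pℤ`, some subset sum
of the `c_s` equals `1`. -/
theorem subsetSums_complete_residues (n : ℕ) (hn : 1 < n)
    (m : Fin (n - 1) → ℤ) (hm : ∀ s, IsCoprime (m s) (n : ℤ)) :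
    (∀ c : ZMod n, ∃ I : Finset (Fin (n - 1)), ∑ s ∈ I, (m s : ZMod n) = c) ∧
    (∀ p : ℕ, p.Prime → ∀ c : Fin (p - 1) → ZMod p, (∀ s, c s ≠ 0) →
      ∃ I : Finset (Fin (p - 1)), ∑ s ∈ I, c s = 1) := by
  have : NeZero n := ⟨by omega⟩
  refine ⟨ZMod.exists_subset_sum_eq_of_isUnit _ fun s => ?_, fun p hp c hc => ?_⟩
  · exact (ZMod.coe_int_isUnit_iff_isCoprime _ _).mpr (hm s).symm
  · have : Fact p.Prime := ⟨hp⟩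
    exact ZMod.exists_subset_sum_eq_of_isUnit c (fun s => (hc s).isUnit) 1
end

section
/- Let R be a ring with identity (one may take R commutative), and let f(x_1,...,x_k) be a polynomial over R. If J ⊆ {1,...,k} and |J| ≥ deg f, then ∑_{I ⊆ J} (−1)^{|J|−|I|} f([[1∈I]],...,[[k∈I]]) = c_J, where c_J is the coefficient of the monomial ∏_{j∈J} x_j in f(x_1,...,x_k). -/
/-!
Expand `f` into monomials. Evaluating `x^d` at the indicator vector of `I` gives `1` exactly when
`supp d ⊆ I`, and the alternating sum of `[S ⊆ I]` over `I ⊆ J` is `[S = J]` (Möbius inversion on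
the Boolean lattice). So only the monomials with support exactly `J` survive, and since every
exponent on `J` is then at least `1` while the total degree is at most `|J|`, the only such monomial
is `∏_{j ∈ J} x_j`.
-/

open Finset

section
variable {σ R : Type*} [CommRing R]

lemma Finset.sum_powerset_neg_one_pow_card_sub_mul_boole_subset [DecidableEq σ]
    (S J : Finset σ) :
    ∑ I ∈ J.powerset, (-1 : R) ^ (#J - #I) * (if S ⊆ I then 1 else 0) =
      if S = J then 1 else 0 := by
  -- For `I ⊆ J`, `[S ⊆ I] = [S ⊆ J] * ∏_{j ∈ J \ I} [j ∉ S]`, so the sum is the expansion of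
  -- `[S ⊆ J] * ∏_{j ∈ J} (1 - [j ∉ S])` given by `prod_add`.
  have hterm : ∀ I ∈ J.powerset, (-1 : R) ^ (#J - #I) * (if S ⊆ I then 1 else 0) =
      (if S ⊆ J then 1 else 0) *
        ((∏ _ ∈ I, (1 : R)) * ∏ j ∈ J \ I, -(if j ∉ S then 1 else 0)) := by
    intro I hI
    rw [mem_powerset] at hI
    have hsub : S ⊆ I ↔ S ⊆ J ∧ ∀ j ∈ J \ I, j ∉ S :=
      ⟨fun h => ⟨h.trans hI, fun j hj hjS => (mem_sdiff.1 hj).2 (h hjS)⟩,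
        fun ⟨hSJ, h⟩ j hjS => by_contra fun hjI => h j (mem_sdiff.2 ⟨hSJ hjS, hjI⟩) hjS⟩
    rw [prod_const_one, one_mul, prod_neg, prod_boole, ← card_sdiff_of_subset hI,
      if_congr hsub rfl rfl, ite_and]
    split_ifs <;> simp
  have hfactor : ∀ j ∈ J, (1 : R) + -(if j ∉ S then 1 else 0) = if j ∈ S then 1 else 0 := by
    intro j _
    by_cases hj : j ∈ S <;> simp [hj]
  rw [sum_congr rfl hterm, ← mul_sum, ← prod_add, prod_congr rfl hfactor, prod_boole,
    boole_mul, ← ite_and]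
  exact if_congr (subset_antisymm_iff (a := S)).symm rfl rfl

lemma MvPolynomial.eval_boole_mem [DecidableEq σ] (f : MvPolynomial σ R) (I : Finset σ) :
    eval (fun s => if s ∈ I then (1 : R) else 0) f =
      ∑ d ∈ f.support, coeff d f * if d.support ⊆ I then 1 else 0 := by
  rw [eval_eq]
  refine sum_congr rfl fun d _ => congrArg _ ?_
  refine (prod_congr rfl fun i hi => ?_).trans (prod_boole.trans (if_congr Iff.rfl rfl rfl))
  rw [ite_pow, one_pow, zero_pow (Finsupp.mem_support_iff.1 hi)]

end

lemma Finsupp.support_eq_iff_eq_sum_single_one {σ : Type*} {d : σ →₀ ℕ} {J : Finset σ}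
    (hd : d.degree ≤ #J) : d.support = J ↔ d = ∑ j ∈ J, single j 1 := by
  classical
  have happly : ∀ i, (∑ j ∈ J, single j 1 : σ →₀ ℕ) i = if i ∈ J then 1 else 0 := by
    simp [finsetSum_apply, single_apply]
  constructor
  · rintro rfl
    have hpos : ∀ i ∈ d.support, 1 ≤ d i := fun i hi => Nat.pos_of_ne_zero (mem_support_iff.1 hi)
    have hone : ∀ i ∈ d.support, 1 = d i := by
      rw [← sum_eq_sum_iff_of_le hpos]
      refine le_antisymm (Finset.sum_le_sum hpos) ?_
      simpa [degree_apply] using hd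
    ext i
    rw [happly]
    split_ifs with hi
    · exact (hone i hi).symm
    · exact notMem_support_iff.1 hi
  · rintro rfl
    ext i
    simp [happly]

/-- **Theorem 3.1** (Sun): Let `R` be a (commutative) ring with identity and let
`f(x₁,…,x_k)` be a polynomial over `R`.  If `J ⊆ {1,…,k}` and `|J| ≥ deg f`, then
`∑_{I ⊆ J} (-1)^{|J|-|I|} f([[1∈I]],…,[[k∈I]])` equals the coefficient of the monomial
`∏_{j∈J} x_j` in `f`. -/
theorem sun_theorem3_1 (R : Type*) [CommRing R] (k : ℕ)
    (f : MvPolynomial (Fin k) R) (J : Finset (Fin k)) (hJ : f.totalDegree ≤ J.card) :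
    ∑ I ∈ J.powerset, (-1 : R) ^ (J.card - I.card) *
        MvPolynomial.eval (fun s => if s ∈ I then (1 : R) else 0) f
      = MvPolynomial.coeff (∑ j ∈ J, Finsupp.single j 1) f := by
  calc _ = ∑ d ∈ f.support, f.coeff d *
          ∑ I ∈ J.powerset, (-1 : R) ^ (#J - #I) * if d.support ⊆ I then 1 else 0 := by
        simp_rw [MvPolynomial.eval_boole_mem, mul_sum]
        rw [sum_comm]
        simp_rw [mul_left_comm]
    _ = ∑ d ∈ f.support, f.coeff d * if d = ∑ j ∈ J, Finsupp.single j 1 then 1 else 0 := by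
        refine sum_congr rfl fun d hd => ?_
        rw [sum_powerset_neg_one_pow_card_sub_mul_boole_subset, if_congr
          (Finsupp.support_eq_iff_eq_sum_single_one ((MvPolynomial.le_totalDegree hd).trans hJ))
          rfl rfl]
    _ = _ := by
        rw [sum_congr rfl fun d _ => mul_boole _ _, sum_ite_eq']
        exact ite_eq_left_iff.2 fun h => (MvPolynomial.notMem_support_iff.1 h).symm
end

section
/- (Escott's identity) Let R be a ring with identity. For any c_1,...,c_k ∈ R and every integer n with 0 ≤ n ≤ k−1, one has ∑_{I ⊆ {1,...,k}} (−1)^{|I|} (∑_{s∈I} c_s)^n = 0, where the empty sum is 0 and 0^0 = 1. -/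
/-!
Expanding `(∑ s ∈ I, c s) ^ n` into words `c (r 0) * ⋯ * c (r (n-1))`, the alternating sum over
`I` becomes a sum over words `r : Fin n → ι` of the word times `∑_{I ⊇ range r} (-1)^|I|`.
A word of length `n < |ι|` misses some letter `a`, and toggling `a` in `I` pairs off the
supersets of `range r` with opposite signs, so every such coefficient vanishes.
-/

open Finset

theorem Finset.sum_powerset_neg_one_pow_card_mul_eq_zero {R α : Type*} [Ring R] [DecidableEq α]
    {s : Finset α} {a : α} (ha : a ∈ s) (f : Finset α → R)
    (hf : ∀ t ⊆ s.erase a, f (insert a t) = f t) :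
    ∑ t ∈ s.powerset, (-1 : R) ^ #t * f t = 0 := by
  rw [← insert_erase ha, sum_powerset_insert (notMem_erase a s), ← sub_neg_eq_add,
    ← sum_neg_distrib, sub_eq_zero]
  refine sum_congr rfl fun t ht => ?_
  have hat : a ∉ t := fun h => notMem_erase a s (mem_powerset.1 ht h)
  rw [card_insert_of_notMem hat, hf t (mem_powerset.1 ht), pow_succ, mul_neg_one, neg_mul, neg_neg]

theorem Finset.sum_pow_eq_sum_piFinset_prod_ofFn {R ι : Type*} [Semiring R] [DecidableEq ι]
    (s : Finset ι) (c : ι → R) (n : ℕ) :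
    (∑ i ∈ s, c i) ^ n = ∑ r ∈ Fintype.piFinset fun _ : Fin n => s, (List.ofFn (c ∘ r)).prod := by
  -- `R` need not be commutative, but it is an `ℕ`-algebra and `x ↦ x ^ n` is `ℕ`-multilinear.
  rw [← MultilinearMap.mkPiAlgebraFin_apply_const (R := ℕ), MultilinearMap.map_sum_finset]
  rfl

theorem Finset.sum_powerset_neg_one_pow_card_mul_sum_pow_eq_zero {R ι : Type*} [Ring R]
    [Fintype ι] [DecidableEq ι] (c : ι → R) {n : ℕ} (hn : n < Fintype.card ι) :
    ∑ I ∈ (univ : Finset ι).powerset, (-1 : R) ^ #I * (∑ s ∈ I, c s) ^ n = 0 := by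
  have hwords : ∀ I : Finset ι, (∑ s ∈ I, c s) ^ n =
      ∑ r : Fin n → ι, if ∀ i, r i ∈ I then (List.ofFn (c ∘ r)).prod else 0 := by
    intro I
    rw [sum_pow_eq_sum_piFinset_prod_ofFn, ← sum_filter]
    congr 1
    ext r
    simp
  simp only [hwords, mul_sum]
  rw [sum_comm]
  refine sum_eq_zero fun r _ => ?_
  obtain ⟨a, hra⟩ : ∃ a, ∀ i, r i ≠ a := by
    by_contra! hsurj
    have := Fintype.card_le_of_surjective r hsurj
    simp only [Fintype.card_fin] at this
    omega
  refine sum_powerset_neg_one_pow_card_mul_eq_zero (mem_univ a) _ fun t _ => ?_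
  simp only [mem_insert, hra, false_or]

/-- **Escott's identity** (Corollary 3.1): Let `R` be a ring with identity.  For any
`c₁,…,c_k ∈ R` and every `n ∈ {0,…,k-1}`,
`∑_{I ⊆ {1,…,k}} (-1)^{|I|} (∑_{s∈I} c_s)^n = 0`. -/
theorem escott_identity (R : Type*) [Ring R] (k : ℕ) (c : Fin k → R)
    (n : ℕ) (hn : n < k) :
    ∑ I ∈ (Finset.univ : Finset (Fin k)).powerset,
      (-1 : R) ^ I.card * (∑ s ∈ I, c s) ^ n = 0 :=
  sum_powerset_neg_one_pow_card_mul_sum_pow_eq_zero c (by simpa using hn)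
end

section
/- Let p be a prime, h a nonnegative integer, and a an integer. Then the generalized binomial coefficient C(a−1, p^h−1) = (a−1)(a−2)⋯(a−p^h+1)/(p^h−1)! satisfies C(a−1, p^h−1) ≡ [[p^h ∣ a]] (mod p), i.e. it is congruent to 1 modulo p if p^h divides a, and congruent to 0 modulo p otherwise. -/
/-!
By Chu–Vandermonde, `C(x + p^h, n) = ∑ C(x, i) C(p^h, j)`, and `p ∣ C(p^h, j)` for `0 < j < p^h`;
so for `n < p^h` the residue of `C(x, n)` modulo `p` only depends on `x` modulo `p^h`. Replacing `a`
by `r = a mod p^h ∈ [0, p^h)`: if `r = 0`, then `C(-1, p^h - 1) = (-1)^(p^h - 1)`, which is `1`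
modulo `p` because `(-1)^(p^h) = -1` in `ZMod p`; otherwise `0 ≤ r - 1 < p^h - 1` and the binomial
coefficient is `0`.
-/

theorem Ring.choose_neg_one (n : ℕ) : Ring.choose (-1 : ℤ) n = (-1) ^ n := by
  rw [Ring.choose, show (-1 : ℤ) - n + 1 = -(n : ℤ) by ring, Ring.multichoose_neg_self]

theorem Ring.choose_eq_zero_of_nonneg_of_lt {m : ℤ} {n : ℕ} (hm : 0 ≤ m) (hmn : m < n) :
    Ring.choose m n = 0 := by
  lift m to ℕ using hm
  rw [Ring.choose_natCast, Nat.choose_eq_zero_of_lt (by exact_mod_cast hmn), Nat.cast_zero]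

namespace ZMod

variable {p : ℕ} [Fact p.Prime]

theorem neg_one_pow_prime_pow_sub_one (h : ℕ) : (-1 : ZMod p) ^ (p ^ h - 1) = 1 := by
  have hfrob : (-1 : ZMod p) ^ (p ^ h - 1) * (-1) = -1 := by
    rw [← pow_succ, Nat.sub_add_cancel (Nat.one_le_pow _ _ (Fact.out : p.Prime).pos),
      pow_card_pow]
  simpa using hfrob

theorem periodic_ringChoose {h n : ℕ} (hn : n < p ^ h) :
    Function.Periodic (fun x : ℤ => ((Ring.choose x n : ℤ) : ZMod p)) (p ^ h : ℤ) := by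
  intro x
  have hvanish : ∀ j, 0 < j → j < p ^ h → ((Ring.choose (p ^ h : ℤ) j : ℤ) : ZMod p) = 0 := by
    intro j hj0 hjp
    rw [← Nat.cast_pow, Ring.choose_natCast, Int.cast_natCast, natCast_eq_zero_iff]
    exact Nat.Prime.dvd_choose_pow Fact.out hj0.ne' hjp.ne
  dsimp only
  rw [Ring.add_choose_eq n (Commute.all _ _), Int.cast_sum, Finset.sum_eq_single (n, 0)]
  · simp
  · rintro ⟨i, j⟩ hij hne
    rw [Finset.HasAntidiagonal.mem_antidiagonal] at hij
    rw [Int.cast_mul, hvanish j (by grind) (by omega), mul_zero]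
  · simp

end ZMod

/-- **Lemma 3.1** (Sun [S09]): Let `p` be a prime, `h ∈ ℕ` and `a ∈ ℤ`.  Then the
generalized binomial coefficient `C(a-1, p^h-1)` is congruent to `1` modulo `p` if
`p^h ∣ a`, and to `0` modulo `p` otherwise. -/
theorem sun_lemma3_1 (p : ℕ) (hp : p.Prime) (h : ℕ) (a : ℤ) :
    Ring.choose (a - 1) (p ^ h - 1) ≡ (if (p ^ h : ℤ) ∣ a then 1 else 0) [ZMOD (p : ℤ)] := by
  have := Fact.mk hp
  have hpow : 0 < p ^ h := pow_pos hp.pos h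
  have hpowZ : (0 : ℤ) < p ^ h := by exact_mod_cast hpow
  have hreduce := (ZMod.periodic_ringChoose (p := p) (Nat.sub_lt hpow one_pos)).sub_int_mul_eq
    (x := a - 1) (a / p ^ h)
  rw [Int.cast_id, show a - 1 - a / p ^ h * p ^ h = a % p ^ h - 1 by rw [Int.emod_def]; ring]
    at hreduce
  rw [← ZMod.intCast_eq_intCast_iff, ← hreduce]
  split_ifs with hdvd
  · rw [Int.emod_eq_zero_of_dvd hdvd, zero_sub, Ring.choose_neg_one]
    push_cast
    exact ZMod.neg_one_pow_prime_pow_sub_one h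
  · have hrem_pos : 0 < a % p ^ h :=
      (Int.emod_nonneg _ hpowZ.ne').lt_of_ne' (mt Int.dvd_of_emod_eq_zero hdvd)
    have hrem_lt : a % p ^ h < p ^ h := Int.emod_lt_of_pos _ hpowZ
    rw [Ring.choose_eq_zero_of_nonneg_of_lt (by omega)
      (by rw [Nat.cast_pred hpow, Nat.cast_pow]; omega)]
end

section
/- Let p be a prime and let k, h_1,...,h_l be positive integers with k ≥ ∑_{t=1}^l (p^{h_t} − 1). Let c_{st} ∈ ℤ for all s ∈ {1,...,k}, t ∈ {1,...,l}, and let c_t ∈ ℤ for t ∈ {1,...,l}. Then ∑ (−1)^{|I|}, the sum taken over all subsets I ⊆ {1,...,k} such that p^{h_t} divides ∑_{s∈I} c_{st} − c_t for every t ∈ {1,...,l}, is congruent modulo p to ∑ ∏_{t=1}^l ∏_{s∈I_t} c_{st}, where the latter sum is over all tuples (I_1,...,I_l) of subsets of {1,...,k} with I_1 ∪ ⋯ ∪ I_l = {1,...,k} and |I_t| = p^{h_t} − 1 for each t (such tuples exist only if k = ∑_{t=1}^l (p^{h_t}−1), in which case the I_t are pairwise disjoint; if k > ∑_{t=1}^l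 (p^{h_t}−1) the right-hand side is an empty sum, equal to 0). -/
/-!
Put `q_t = p ^ h_t`, pick `a_{st} ≡ c_{st}` and `b_t ≡ -c_t - 1` modulo `q_t` in `[0, q_t)`, and
compute the coefficient of `∏_t x_t ^ (q_t - 1)` in
`F = ∏_t (1 + x_t) ^ b_t * ∏_s (1 - ∏_t (1 + x_t) ^ a_{st})` over `𝔽_p` in two ways.

Expanding the product over subsets `I`, the coefficient is `∑_I (-1)^|I| ∏_t binom(N_t, q_t - 1)`
with `N_t ≡ ∑_{s ∈ I} c_{st} - c_t - 1 (mod q_t)`. Since `(1 + x)^q = 1 + x^q` in characteristic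
`p`, `binom(N, q - 1) ≡ [q ∣ N + 1] (mod p)`, which yields the left-hand side.

On the other hand each factor `1 - ∏_t (1 + x_t)^{a_{st}}` agrees with `-∑_t c_{st} x_t` up to
terms of degree `≥ 2` (as `p ∣ q_t`), and the first product is `1` up to terms of degree `≥ 1`, so
`F ≡ (-1)^k ∏_s ∑_t c_{st} x_t` modulo terms of degree `> k`. As the monomial has degree
`∑_t (q_t - 1) ≤ k`, its coefficient in `F` is a signed sum over the maps `s ↦ t` whose fibres
have sizes `q_t - 1`, i.e. over the tuples `(I_1, …, I_l)`. If there is such a tuple then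
`k = ∑_t (q_t - 1)`, and the sign is `1` because `(-1)^(q - 1) = 1` in `𝔽_p`.
-/

open Finset

theorem Nat.dvd_add_one_iff_mod_eq_sub_one {n q : ℕ} (hq : 0 < q) :
    q ∣ n + 1 ↔ n % q = q - 1 := by
  conv_lhs => rw [← Nat.mod_add_div n q, add_right_comm, Nat.dvd_add_left (dvd_mul_right q _)]
  constructor
  · intro hd
    have := Nat.le_of_dvd (Nat.succ_pos _) hd
    have := Nat.mod_lt n hq
    omega
  · intro h
    rw [h, Nat.sub_add_cancel hq]

open Polynomial in
theorem Nat.cast_choose_prime_pow_sub_one (p : ℕ) [Fact p.Prime] (h n : ℕ) :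
    (n.choose (p ^ h - 1) : ZMod p) = if p ^ h ∣ n + 1 then 1 else 0 := by
  set q := p ^ h
  have hq : 0 < q := pow_pos (Fact.out : p.Prime).pos h
  obtain ⟨g, hg⟩ : (X : (ZMod p)[X]) ^ q ∣ (X ^ q + 1) ^ (n / q) - 1 := by
    simpa using sub_dvd_pow_sub_pow ((X : (ZMod p)[X]) ^ q + 1) 1 (n / q)
  have hsplit : ((X : (ZMod p)[X]) + 1) ^ n =
      (X + 1) ^ (n % q) + X ^ q * (g * (X + 1) ^ (n % q)) := by
    rw [← Nat.mod_add_div n q, pow_add, pow_mul, add_pow_char_pow, one_pow, Nat.mod_add_div,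
      eq_add_of_sub_eq' hg]
    ring
  have key := congrArg (coeff · (q - 1)) hsplit
  simp only [coeff_X_add_one_pow, coeff_add, coeff_X_pow_mul',
    if_neg (Nat.sub_lt hq one_pos).not_ge, add_zero] at key
  rw [key]
  split_ifs with hr <;> rw [Nat.dvd_add_one_iff_mod_eq_sub_one hq] at hr
  · rw [hr, Nat.choose_self, Nat.cast_one]
  · rw [Nat.choose_eq_zero_of_lt (by have := Nat.mod_lt n hq; omega), Nat.cast_zero]

theorem ZMod.natCast_val_intCast_of_dvd {p q : ℕ} [NeZero q] (hpq : p ∣ q) (z : ℤ) :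
    (((z : ZMod q).val : ℕ) : ZMod p) = z := by
  rw [ZMod.natCast_val, ZMod.cast_intCast hpq]

theorem ZMod.dvd_val_add_sum_val_add_one_iff {ι : Type*} {q : ℕ} [NeZero q] (I : Finset ι)
    (z : ι → ℤ) (z₀ : ℤ) :
    q ∣ (((-z₀ - 1 : ℤ) : ZMod q).val + ∑ s ∈ I, (z s : ZMod q).val) + 1 ↔
      (q : ℤ) ∣ ∑ s ∈ I, z s - z₀ := by
  rw [← ZMod.natCast_eq_zero_iff, ← ZMod.intCast_zmod_eq_zero_iff_dvd]
  push_cast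
  simp only [ZMod.natCast_zmod_val]
  ring_nf

theorem ZMod.cast_choose_val_add_sum_val {ι : Type*} (p : ℕ) [Fact p.Prime] (h : ℕ)
    (I : Finset ι) (z : ι → ℤ) (z₀ : ℤ) :
    (((((-z₀ - 1 : ℤ) : ZMod (p ^ h)).val + ∑ s ∈ I, (z s : ZMod (p ^ h)).val).choose
        (p ^ h - 1) : ℕ) : ZMod p) = if (p : ℤ) ^ h ∣ ∑ s ∈ I, z s - z₀ then 1 else 0 := by
  rw [Nat.cast_choose_prime_pow_sub_one]
  exact if_congr (by exact_mod_cast ZMod.dvd_val_add_sum_val_add_one_iff I z z₀) rfl rfl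

theorem neg_one_pow_sum_prime_pow_sub_one (R : Type*) [CommRing R] (p : ℕ) [Fact p.Prime]
    [CharP R p] {σ : Type*} (s : Finset σ) (h : σ → ℕ) :
    (-1 : R) ^ ∑ t ∈ s, (p ^ h t - 1) = 1 := by
  rw [← prod_pow_eq_pow_sum]
  refine prod_eq_one fun t _ => ?_
  have hpow := neg_one_pow_char_pow R p (h t)
  rwa [← Nat.sub_add_cancel (Nat.one_le_pow (h t) p (Fact.out : p.Prime).pos), pow_succ,
    mul_neg_one, neg_inj] at hpow

theorem neg_one_pow_card_eq_one_of_biUnion_eq_univ (R : Type*) [CommRing R] (p : ℕ)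
    [Fact p.Prime] [CharP R p] {ι σ : Type*} [Fintype ι] [DecidableEq ι] [Fintype σ]
    (h : σ → ℕ) (hk : ∑ t, (p ^ h t - 1) ≤ Fintype.card ι) {T : σ → Finset ι}
    (hcover : univ.biUnion T = univ) (hcard : ∀ t, #(T t) = p ^ h t - 1) :
    (-1 : R) ^ Fintype.card ι = 1 := by
  have hcardι : Fintype.card ι = ∑ t, (p ^ h t - 1) := by
    refine le_antisymm ?_ hk
    simpa [hcover, hcard] using card_biUnion_le (s := univ) (t := T)
  rw [hcardι, neg_one_pow_sum_prime_pow_sub_one]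

theorem Finset.prod_eq_prod_fiberwise {ι σ M : Type*} [CommMonoid M] [Fintype ι] [Fintype σ]
    [DecidableEq σ] (g : ι → σ) (v : ι → σ → M) :
    ∏ s, v s (g s) = ∏ t, ∏ s with g s = t, v s t := by
  rw [← prod_fiberwise univ g]
  exact prod_congr rfl fun t _ => prod_congr rfl fun s hs => by rw [(mem_filter.mp hs).2]

theorem Finset.sum_fibers_eq_sum_covers {ι σ M : Type*} [Fintype ι] [DecidableEq ι] [Fintype σ]
    [DecidableEq σ] [AddCommMonoid M] (n : σ → ℕ) (hn : ∑ t, n t ≤ Fintype.card ι)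
    (f : (σ → Finset ι) → M) :
    ∑ g : ι → σ with ∀ t, #{s | g s = t} = n t, f (fun t => {s | g s = t}) =
      ∑ T : σ → Finset ι with univ.biUnion T = univ ∧ ∀ t, #(T t) = n t, f T := by
  refine sum_nbij (fun g t => {s | g s = t}) ?_ ?_ ?_ fun _ _ => rfl
  · intro g hg
    simp only [mem_filter, mem_univ, true_and] at hg ⊢
    exact ⟨eq_univ_of_forall fun s => mem_biUnion.mpr ⟨g s, mem_univ _, by simp⟩, hg⟩
  · intro g₁ _ g₂ _ hfib
    funext s
    have hs : s ∈ ({s' | g₁ s' = g₁ s} : Finset ι) := by simp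
    rw [show ({s' | g₁ s' = g₁ s} : Finset ι) = ({s' | g₂ s' = g₁ s} : Finset ι) from
      congrFun hfib (g₁ s), mem_filter] at hs
    exact hs.2.symm
  · intro T hT
    simp only [mem_coe, mem_filter, mem_univ, true_and] at hT
    obtain ⟨hcover, hcard⟩ := hT
    have hex (s : ι) : ∃ t, s ∈ T t := by
      simpa using (hcover ▸ mem_univ s : s ∈ univ.biUnion T)
    choose g hg using hex
    have hsub (t : σ) : ({s | g s = t} : Finset ι) ⊆ T t :=
      fun s hs => (mem_filter.mp hs).2 ▸ hg s
    -- the fibres of `g` exhaust `ι`, whose size is at least `∑ t, #(T t)`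
    have hsum : ∑ t, #({s | g s = t} : Finset ι) = ∑ t, #(T t) := by
      refine le_antisymm (sum_le_sum fun t _ => card_le_card (hsub t)) ?_
      rw [← card_eq_sum_card_fiberwise (fun _ _ => mem_coe.mpr (mem_univ _)), card_univ]
      simpa only [hcard] using hn
    have hfib (t : σ) : ({s | g s = t} : Finset ι) = T t :=
      eq_of_subset_of_card_le (hsub t)
        ((sum_eq_sum_iff_of_le fun t _ => card_le_card (hsub t)).mp hsum t (mem_univ t)).ge
    refine ⟨g, ?_, funext hfib⟩
    simp only [mem_coe, mem_filter, mem_univ, true_and]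
    exact fun t => hfib t ▸ hcard t

namespace Ideal

variable {R ι : Type*} [CommRing R] {J : Ideal R}

theorem one_add_pow_sub_one_sub_mul_mem_sq {x : R} (hx : x ∈ J) (n : ℕ) :
    (1 + x) ^ n - 1 - n * x ∈ J ^ 2 := by
  induction n with
  | zero => simp
  | succ n ih =>
    have key : (1 + x) ^ (n + 1) - 1 - (n + 1 : ℕ) * x
        = (1 + x) * ((1 + x) ^ n - 1 - n * x) + n * (x * x) := by
      push_cast; ring
    rw [key]
    refine add_mem (mul_mem_left _ _ ih) (mul_mem_left _ _ ?_)
    rw [sq]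
    exact mul_mem_mul hx hx

theorem prod_sub_one_sub_sum_mem_sq (s : Finset ι) {f g : ι → R}
    (hg : ∀ i ∈ s, g i ∈ J) (hfg : ∀ i ∈ s, f i - 1 - g i ∈ J ^ 2) :
    ∏ i ∈ s, f i - 1 - ∑ i ∈ s, g i ∈ J ^ 2 := by
  classical
  induction s using Finset.induction_on with
  | empty => simp
  | insert i s hi ih =>
    rw [prod_insert hi, sum_insert hi]
    have key : f i * ∏ j ∈ s, f j - 1 - (g i + ∑ j ∈ s, g j)
        = (f i - 1 - g i) * ∏ j ∈ s, f j + (1 + g i) * (∏ j ∈ s, f j - 1 - ∑ j ∈ s, g j)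
          + g i * ∑ j ∈ s, g j := by ring
    rw [key]
    refine add_mem (add_mem (mul_mem_right _ _ (hfg i (mem_insert_self i s)))
      (mul_mem_left _ _ (ih (fun j hj => hg j (mem_insert_of_mem hj))
        (fun j hj => hfg j (mem_insert_of_mem hj))))) ?_
    rw [sq]
    exact mul_mem_mul (hg i (mem_insert_self i s))
      (J.sum_mem fun j hj => hg j (mem_insert_of_mem hj))

theorem prod_sub_prod_mem_pow_card_add_one (s : Finset ι) {a b : ι → R}
    (hb : ∀ i ∈ s, b i ∈ J) (hab : ∀ i ∈ s, a i - b i ∈ J ^ 2) :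
    ∏ i ∈ s, a i - ∏ i ∈ s, b i ∈ J ^ (#s + 1) := by
  classical
  induction s using Finset.induction_on with
  | empty => simp
  | insert i s hi ih =>
    rw [prod_insert hi, prod_insert hi, card_insert_of_notMem hi]
    have hai : a i ∈ J := by
      simpa using add_mem (hb i (mem_insert_self i s))
        (pow_le_self two_ne_zero (hab i (mem_insert_self i s)))
    have hB : ∏ j ∈ s, b j ∈ J ^ #s := by
      simpa using prod_mem_prod (I := fun _ => J) fun j hj => hb j (mem_insert_of_mem hj)
    have key : a i * ∏ j ∈ s, a j - b i * ∏ j ∈ s, b j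
        = a i * (∏ j ∈ s, a j - ∏ j ∈ s, b j) + (a i - b i) * ∏ j ∈ s, b j := by ring
    rw [key]
    refine add_mem ?_ ?_
    · rw [pow_succ' J (#s + 1)]
      exact mul_mem_mul hai (ih (fun j hj => hb j (mem_insert_of_mem hj))
        (fun j hj => hab j (mem_insert_of_mem hj)))
    · rw [show #s + 1 + 1 = 2 + #s by ring, pow_add]
      exact mul_mem_mul (hab i (mem_insert_self i s)) hB

end Ideal

namespace MvPolynomial

variable {σ K ι : Type*} [CommRing K]

theorem X_mem_idealOfVars (t : σ) : (X t : MvPolynomial σ K) ∈ idealOfVars σ K :=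
  Ideal.subset_span ⟨t, rfl⟩

theorem coeff_eq_of_sub_mem_pow_idealOfVars {f g : MvPolynomial σ K} {n : ℕ} {e : σ →₀ ℕ}
    (hfg : f - g ∈ idealOfVars σ K ^ n) (he : e.degree < n) : coeff e f = coeff e g := by
  rw [← sub_eq_zero, ← coeff_sub]
  exact (mem_pow_idealOfVars_iff' n _).mp hfg e he

variable [Fintype σ]

variable (K) in
noncomputable def prodOneAddXPow (m : σ → ℕ) : MvPolynomial σ K := ∏ t, (1 + X t) ^ m t

theorem prodOneAddXPow_mul (m m' : σ → ℕ) :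
    prodOneAddXPow K m * prodOneAddXPow K m' = prodOneAddXPow K (m + m') := by
  simp only [prodOneAddXPow, Pi.add_apply, pow_add, prod_mul_distrib]

theorem prod_prodOneAddXPow (s : Finset ι) (m : ι → σ → ℕ) :
    ∏ i ∈ s, prodOneAddXPow K (m i) = prodOneAddXPow K (∑ i ∈ s, m i) := by
  simp only [prodOneAddXPow, Finset.sum_apply, ← prod_pow_eq_pow_sum]
  exact prod_comm

theorem coeff_prodOneAddXPow (m : σ → ℕ) (e : σ →₀ ℕ) :
    coeff e (prodOneAddXPow K m) = ∏ t, ((m t).choose (e t) : K) := by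
  classical
  have hbinom (t : σ) : (1 + X t : MvPolynomial σ K) ^ m t =
      ∑ j ∈ range (m t + 1), monomial (Finsupp.single t j) ((m t).choose j : K) := by
    rw [add_comm, add_pow]
    refine sum_congr rfl fun j _ => ?_
    rw [one_pow, mul_one, X_pow_eq_monomial, ← map_natCast C, mul_comm, C_mul_monomial, mul_one]
  simp_rw [prodOneAddXPow, hbinom, prod_univ_sum, ← monomial_sum_prod, coeff_sum, coeff_monomial,
    ← Finsupp.equivFunOnFinite_symm_eq_sum, Equiv.symm_apply_eq]
  rw [sum_ite_eq']
  split_ifs with he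
  · rfl
  · obtain ⟨t, ht⟩ : ∃ t, m t < e t := by simpa [Fintype.mem_piFinset, Nat.lt_succ_iff] using he
    exact (prod_eq_zero (mem_univ t) (by rw [Nat.choose_eq_zero_of_lt ht, Nat.cast_zero])).symm

theorem prodOneAddXPow_sub_one_sub_mem_sq (m : σ → ℕ) :
    prodOneAddXPow K m - 1 - ∑ t, C (m t : K) * X t ∈ idealOfVars σ K ^ 2 := by
  refine Ideal.prod_sub_one_sub_sum_mem_sq _
    (fun t _ => Ideal.mul_mem_left _ _ (X_mem_idealOfVars t)) fun t _ => ?_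
  rw [map_natCast]
  exact Ideal.one_add_pow_sub_one_sub_mul_mem_sq (X_mem_idealOfVars t) (m t)

theorem prodOneAddXPow_sub_one_mem_idealOfVars (m : σ → ℕ) :
    prodOneAddXPow K m - 1 ∈ idealOfVars σ K := by
  have hlin : ∑ t, C (m t : K) * X t ∈ idealOfVars σ K :=
    Ideal.sum_mem _ fun t _ => Ideal.mul_mem_left _ _ (X_mem_idealOfVars t)
  simpa using add_mem (Ideal.pow_le_self two_ne_zero (prodOneAddXPow_sub_one_sub_mem_sq m)) hlin

variable [Fintype ι]

theorem coeff_prod_sum_C_mul_X [DecidableEq ι] [DecidableEq σ] (a : ι → σ → K) (e : σ →₀ ℕ) :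
    coeff e (∏ s, ∑ t, C (a s t) * X t) =
      ∑ g : ι → σ with ∀ t, #{s | g s = t} = e t, ∏ s, a s (g s) := by
  simp_rw [C_mul_X_eq_monomial, prod_univ_sum, Fintype.piFinset_univ, ← monomial_sum_prod,
    coeff_sum, coeff_monomial, sum_filter]
  refine sum_congr rfl fun g _ => if_congr ?_ rfl rfl
  simp [Finsupp.ext_iff, Finsupp.finsetSum_apply, Finsupp.single_apply, sum_boole]

theorem coeff_prod_sum_C_mul_X_eq_sum_covers [DecidableEq ι] [DecidableEq σ] (a : ι → σ → K)
    {e : σ →₀ ℕ} (he : e.degree ≤ Fintype.card ι) :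
    coeff e (∏ s, ∑ t, C (a s t) * X t) =
      ∑ T : σ → Finset ι with univ.biUnion T = univ ∧ ∀ t, #(T t) = e t,
        ∏ t, ∏ s ∈ T t, a s t := by
  rw [coeff_prod_sum_C_mul_X, sum_congr rfl fun g _ => prod_eq_prod_fiberwise g a]
  exact sum_fibers_eq_sum_covers e (by rwa [← Finsupp.degree_eq_sum])
    fun T => ∏ t, ∏ s ∈ T t, a s t

theorem coeff_mul_prod_one_sub_prodOneAddXPow [DecidableEq ι] (b : σ → ℕ) (a : ι → σ → ℕ)
    (e : σ →₀ ℕ) :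
    coeff e (prodOneAddXPow K b * ∏ s, (1 - prodOneAddXPow K (a s))) =
      ∑ I ∈ univ.powerset, (-1) ^ #I * ∏ t, ((b t + ∑ s ∈ I, a s t).choose (e t) : K) := by
  rw [prod_sub, mul_sum, coeff_sum]
  refine sum_congr rfl fun I _ => ?_
  rw [prod_const_one, mul_one, mul_left_comm, prod_prodOneAddXPow, prodOneAddXPow_mul,
    show ((-1) ^ #I : MvPolynomial σ K) = C ((-1) ^ #I) by simp, coeff_C_mul,
    coeff_prodOneAddXPow]
  simp only [Pi.add_apply, Finset.sum_apply]

theorem coeff_mul_prod_one_sub_prodOneAddXPow_of_degree_le (b : σ → ℕ) (a : ι → σ → ℕ)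
    {e : σ →₀ ℕ} (he : e.degree ≤ Fintype.card ι) :
    coeff e (prodOneAddXPow K b * ∏ s, (1 - prodOneAddXPow K (a s))) =
      (-1) ^ Fintype.card ι * coeff e (∏ s, ∑ t, C (a s t : K) * X t) := by
  set L : ι → MvPolynomial σ K := fun s => ∑ t, C (a s t : K) * X t
  have hL (s : ι) : -L s ∈ idealOfVars σ K :=
    neg_mem (Ideal.sum_mem _ fun t _ => Ideal.mul_mem_left _ _ (X_mem_idealOfVars t))
  have hprod : ∏ s, (1 - prodOneAddXPow K (a s)) - ∏ s, -L s ∈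
      idealOfVars σ K ^ (Fintype.card ι + 1) := by
    refine Ideal.prod_sub_prod_mem_pow_card_add_one univ (fun s _ => hL s) fun s _ => ?_
    rw [show 1 - prodOneAddXPow K (a s) - -L s = -(prodOneAddXPow K (a s) - 1 - L s) by ring]
    exact neg_mem (prodOneAddXPow_sub_one_sub_mem_sq (a s))
  have hprodL : ∏ s, -L s ∈ idealOfVars σ K ^ Fintype.card ι := by
    have := Ideal.prod_mem_prod (I := fun _ => idealOfVars σ K) fun s (_ : s ∈ univ) => hL s
    rwa [prod_const, card_univ] at this
  have hdiff : prodOneAddXPow K b * ∏ s, (1 - prodOneAddXPow K (a s)) - ∏ s, -L s ∈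
      idealOfVars σ K ^ (Fintype.card ι + 1) := by
    have key : prodOneAddXPow K b * ∏ s, (1 - prodOneAddXPow K (a s)) - ∏ s, -L s =
        prodOneAddXPow K b * (∏ s, (1 - prodOneAddXPow K (a s)) - ∏ s, -L s) +
          (prodOneAddXPow K b - 1) * ∏ s, -L s := by ring
    rw [key, pow_succ']
    exact add_mem (Ideal.mul_mem_left _ _ (pow_succ' (idealOfVars σ K) _ ▸ hprod))
      (Ideal.mul_mem_mul (prodOneAddXPow_sub_one_mem_idealOfVars b) hprodL)
  rw [coeff_eq_of_sub_mem_pow_idealOfVars hdiff (Nat.lt_succ_of_le he), prod_neg, card_univ,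
    show ((-1) ^ Fintype.card ι : MvPolynomial σ K) = C ((-1) ^ Fintype.card ι) by simp,
    coeff_C_mul]

end MvPolynomial

open MvPolynomial in
theorem sun_theorem3_2_general (p : ℕ) (hp : p.Prime) (k l : ℕ)
    (h : Fin l → ℕ) (hh : ∀ t, 0 < h t)
    (hk : ∑ t, (p ^ h t - 1) ≤ k)
    (c : Fin k → Fin l → ℤ) (c0 : Fin l → ℤ) :
    (∑ I ∈ (Finset.univ : Finset (Fin k)).powerset.filter
        (fun I => ∀ t, (p ^ h t : ℤ) ∣ (∑ s ∈ I, c s t) - c0 t),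
      (-1 : ℤ) ^ I.card)
    ≡
    (∑ T ∈ (Finset.univ : Finset (Fin l → Finset (Fin k))).filter
        (fun T => Finset.univ.biUnion T = Finset.univ ∧ ∀ t, (T t).card = p ^ h t - 1),
      ∏ t, ∏ s ∈ T t, c s t) [ZMOD (p : ℤ)] := by
  have : Fact p.Prime := ⟨hp⟩
  rw [← ZMod.intCast_eq_intCast_iff]
  push_cast
  set e : Fin l →₀ ℕ := Finsupp.equivFunOnFinite.symm fun t => p ^ h t - 1
  set a : Fin k → Fin l → ℕ := fun s t => (c s t : ZMod (p ^ h t)).val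
  set b : Fin l → ℕ := fun t => ((-c0 t - 1 : ℤ) : ZMod (p ^ h t)).val
  have hdeg : e.degree ≤ Fintype.card (Fin k) := by simpa [Finsupp.degree_eq_sum, e] using hk
  have hcast (s t) : (a s t : ZMod p) = c s t :=
    ZMod.natCast_val_intCast_of_dvd (dvd_pow_self p (hh t).ne') _
  calc _ = coeff e (prodOneAddXPow (ZMod p) b * ∏ s, (1 - prodOneAddXPow (ZMod p) (a s))) := by
        rw [coeff_mul_prod_one_sub_prodOneAddXPow, sum_filter]
        refine sum_congr rfl fun I _ => ?_
        simp only [e, a, b, Finsupp.coe_equivFunOnFinite_symm, ZMod.cast_choose_val_add_sum_val,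
          prod_boole, mem_univ, forall_const, mul_ite, mul_one, mul_zero]
    _ = (-1) ^ k * coeff e (∏ s, ∑ t, C (c s t : ZMod p) * X t) := by
        rw [coeff_mul_prod_one_sub_prodOneAddXPow_of_degree_le b a hdeg, Fintype.card_fin]
        simp only [hcast]
    _ = (-1) ^ k * ∑ T : Fin l → Finset (Fin k) with
          univ.biUnion T = univ ∧ ∀ t, #(T t) = p ^ h t - 1, ∏ t, ∏ s ∈ T t, (c s t : ZMod p) := by
        rw [coeff_prod_sum_C_mul_X_eq_sum_covers _ hdeg]
        -- the two filters differ only in their `Decidable` instances for `∀ t : Fin l, _`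
        congr!
    _ = _ := by
        rw [mul_sum]
        refine sum_congr rfl fun T hT => ?_
        obtain ⟨hcover, hcard⟩ := (mem_filter.mp hT).2
        have hsign := neg_one_pow_card_eq_one_of_biUnion_eq_univ (ZMod p) p h
          (by simpa using hk) hcover hcard
        rw [Fintype.card_fin] at hsign
        rw [hsign, one_mul]

/-- **Theorem 3.2** (Sun): Let `p` be a prime and `k, h₁,…,h_l` positive integers with
`k ≥ ∑_{t=1}^l (p^{h_t} - 1)`.  Let `c_{st}, c_t ∈ ℤ`.  Then
`∑_{I ⊆ [1,k], p^{h_t} ∣ ∑_{s∈I} c_{st} - c_t ∀t} (-1)^{|I|}` is congruent modulo `p` to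
`∑_{I₁∪⋯∪I_l = [1,k], |I_t| = p^{h_t}-1} ∏_{t=1}^l ∏_{s∈I_t} c_{st}`. -/
theorem sun_theorem3_2 (p : ℕ) (hp : p.Prime) (k l : ℕ) (hl : 0 < l)
    (h : Fin l → ℕ) (hh : ∀ t, 0 < h t)
    (hk : ∑ t, (p ^ h t - 1) ≤ k)
    (c : Fin k → Fin l → ℤ) (c0 : Fin l → ℤ) :
    (∑ I ∈ (Finset.univ : Finset (Fin k)).powerset.filter
        (fun I => ∀ t, (p ^ h t : ℤ) ∣ (∑ s ∈ I, c s t) - c0 t),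
      (-1 : ℤ) ^ I.card)
    ≡
    (∑ T ∈ (Finset.univ : Finset (Fin l → Finset (Fin k))).filter
        (fun T => Finset.univ.biUnion T = Finset.univ ∧ ∀ t, (T t).card = p ^ h t - 1),
      ∏ t, ∏ s ∈ T t, c s t) [ZMOD (p : ℤ)] :=
  sun_theorem3_2_general p hp k l h hh hk c c0
end

section
/- Let p be a prime and h a positive integer. For any integers c, c_1,...,c_{p^h−1}, one has ∑ (−1)^{|I|} ≡ c_1 c_2 ⋯ c_{p^h−1} (mod p), where the sum is over all subsets I ⊆ {1,...,p^h−1} such that p^h divides ∑_{s∈I} c_s − c. -/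
/-! In the group algebra `𝔽_p[ℤ/p^h]` with generator `x`, expanding `∏ₛ (1 - x^{cₛ})` over
subsets shows that its coefficient at `x^c` is the left-hand side mod `p`. On the other hand
`1 - x^a = (1 - x)(1 + x + ⋯ + x^{a-1})`, and cancelling `1 - X` in the Frobenius identity
`(1 - X)^{p^h} = 1 - X^{p^h}` in `𝔽_p[X]` gives `(1 - x)^{p^h-1} = N := 1 + x + ⋯ + x^{p^h-1}`.
Since `xN = N`, each factor `1 + x + ⋯ + x^{a-1}` acts on `N` as multiplication by `a`, so the
product equals `c₁⋯c_{p^h-1} · N`, whose coefficients all equal `c₁⋯c_{p^h-1}`. -/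

open Finset

open Polynomial in
theorem one_sub_pow_prime_pow_sub_one {p : ℕ} [Fact p.Prime] {A : Type*} [CommRing A]
    [Algebra (ZMod p) A] (x : A) (h : ℕ) :
    (1 - x) ^ (p ^ h - 1) = ∑ i ∈ range (p ^ h), x ^ i := by
  have hX : ((1 : (ZMod p)[X]) - X) ^ (p ^ h - 1) = ∑ i ∈ range (p ^ h), X ^ i := by
    have hne : (1 : (ZMod p)[X]) - X ≠ 0 := by
      simpa [neg_sub] using neg_ne_zero.2 (X_sub_C_ne_zero (1 : ZMod p))
    refine mul_left_cancel₀ hne ?_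
    rw [← pow_succ', Nat.sub_add_cancel (pow_pos (Fact.out : p.Prime).pos h),
      sub_pow_char_pow, one_pow, mul_neg_geom_sum]
  simpa using congrArg (aeval x) hX

theorem mul_geom_sum_eq_self_of_pow_eq_one {R : Type*} [Ring R] {x : R} {n : ℕ}
    (hx : x ^ n = 1) : x * ∑ i ∈ range n, x ^ i = ∑ i ∈ range n, x ^ i := by
  have := (geom_sum_succ (x := x) (n := n)).symm.trans geom_sum_succ'
  rw [hx, add_comm] at this
  exact add_left_cancel this

theorem geom_sum_mul_of_mul_eq_self {R : Type*} [Semiring R] {x N : R} (hN : x * N = N)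
    (a : ℕ) : (∑ i ∈ range a, x ^ i) * N = a * N := by
  have hpow : ∀ i : ℕ, x ^ i * N = N := by
    intro i
    induction i with
    | zero => rw [pow_zero, one_mul]
    | succ i ih => rw [pow_succ', mul_assoc, ih, hN]
  simp [sum_mul, hpow]

theorem Finset.prod_mul_eq_prod_mul_of_forall {ι R : Type*} [CommMonoid R] {S : Finset ι}
    {f g : ι → R} {N : R} (hfg : ∀ s ∈ S, f s * N = g s * N) :
    (∏ s ∈ S, f s) * N = (∏ s ∈ S, g s) * N := by
  classical
  induction S using Finset.induction_on with
  | empty => rfl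
  | insert s S hs ih =>
    calc (∏ t ∈ insert s S, f t) * N = f s * ((∏ t ∈ S, f t) * N) := by
          rw [prod_insert hs, mul_assoc]
      _ = (∏ t ∈ S, g t) * (f s * N) := by
          rw [ih fun t ht => hfg t (mem_insert_of_mem ht), mul_left_comm]
      _ = (∏ t ∈ insert s S, g t) * N := by
          rw [hfg s (mem_insert_self s S), prod_insert hs, mul_left_comm, mul_assoc]

theorem prod_one_sub_pow_eq_prod_mul_geom_sum {p : ℕ} [Fact p.Prime] {A : Type*} [CommRing A]
    [Algebra (ZMod p) A] {h : ℕ} {x : A} (hx : x ^ p ^ h = 1) {ι : Type*} {S : Finset ι}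
    (hS : #S = p ^ h - 1) (a : ι → ℕ) :
    ∏ s ∈ S, (1 - x ^ a s) = (∏ s ∈ S, (a s : A)) * ∑ i ∈ range (p ^ h), x ^ i :=
  calc ∏ s ∈ S, (1 - x ^ a s) = ∏ s ∈ S, ((1 - x) * ∑ i ∈ range (a s), x ^ i) := by
        simp only [mul_neg_geom_sum]
    _ = (1 - x) ^ (p ^ h - 1) * ∏ s ∈ S, ∑ i ∈ range (a s), x ^ i := by
        rw [prod_mul_distrib, prod_const, hS]
    _ = (∏ s ∈ S, ∑ i ∈ range (a s), x ^ i) * ∑ i ∈ range (p ^ h), x ^ i := by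
        rw [one_sub_pow_prime_pow_sub_one, mul_comm]
    _ = (∏ s ∈ S, (a s : A)) * ∑ i ∈ range (p ^ h), x ^ i :=
        prod_mul_eq_prod_mul_of_forall fun s _ =>
          geom_sum_mul_of_mul_eq_self (mul_geom_sum_eq_self_of_pow_eq_one hx) (a s)

namespace AddMonoidAlgebra

theorem prod_one_sub_single {k G ι : Type*} [CommRing k] [AddCommMonoid G] [DecidableEq ι]
    (S : Finset ι) (g : ι → G) :
    ∏ s ∈ S, (1 - single (g s) (1 : k)) = ∑ I ∈ S.powerset, single (∑ s ∈ I, g s) ((-1) ^ #I) := by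
  have hsplit : ∀ s, (1 : AddMonoidAlgebra k G) - single (g s) 1 = single (g s) (-1) + 1 := by
    intro s; rw [single_neg]; abel
  simp only [hsplit, prod_add, prod_const_one, mul_one, prod_single, prod_const]

theorem coeff_natCast_mul_geom_sum_single_one {k : Type*} [Semiring k] {n : ℕ} [NeZero n]
    (m : ℕ) (c : ZMod n) :
    ((m : AddMonoidAlgebra k (ZMod n)) * ∑ i ∈ range n, single 1 1 ^ i).coeff c = (m : k) := by
  suffices (∑ i ∈ range n, single (1 : ZMod n) (1 : k) ^ i).coeff c = 1 by
    rw [natCast_def, coeff_single_zero_mul, this, mul_one]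
  simp only [single_pow, one_pow, nsmul_one, coeff_sum, Finsupp.finsetSum_apply, coeff_single,
    Finsupp.single_apply]
  rw [sum_eq_single_of_mem c.val (mem_range.2 c.val_lt), if_pos (ZMod.natCast_zmod_val c)]
  intro i hi hic
  rw [if_neg]
  rintro rfl
  exact hic (ZMod.val_cast_of_lt (mem_range.1 hi)).symm

theorem coeff_prod_one_sub_single {k G ι : Type*} [CommRing k] [AddCommMonoid G] [DecidableEq G]
    [DecidableEq ι] (S : Finset ι) (g : ι → G) (c : G) :
    (∏ s ∈ S, (1 - single (g s) (1 : k))).coeff c =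
      ∑ I ∈ S.powerset with ∑ s ∈ I, g s = c, (-1) ^ #I := by
  simp only [prod_one_sub_single, coeff_sum, Finsupp.finsetSum_apply, coeff_single,
    Finsupp.single_apply, sum_filter]

end AddMonoidAlgebra

open AddMonoidAlgebra in
/-- **Corollary 3.3(i)** (Sun): Let `p` be a prime and `h ≥ 1`.  For any integers
`c, c₁,…,c_{p^h-1}`,
`∑_{I ⊆ [1,p^h-1], p^h ∣ ∑_{s∈I} c_s - c} (-1)^{|I|} ≡ c₁⋯c_{p^h-1} (mod p)`. -/
theorem sun_corollary3_3i (p : ℕ) (hp : p.Prime) (h : ℕ) (hh : 0 < h)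
    (c : ℤ) (cs : Fin (p ^ h - 1) → ℤ) :
    (∑ I ∈ (Finset.univ : Finset (Fin (p ^ h - 1))).powerset.filter
        (fun I => (p ^ h : ℤ) ∣ (∑ s ∈ I, cs s) - c),
      (-1 : ℤ) ^ I.card)
    ≡ (∏ s, cs s) [ZMOD (p : ℤ)] := by
  have : Fact p.Prime := ⟨hp⟩
  have : NeZero (p ^ h) := ⟨(pow_pos hp.pos h).ne'⟩
  have hx : single (1 : ZMod (p ^ h)) (1 : ZMod p) ^ p ^ h = 1 := by simp [single_pow, one_def]
  have hxa : ∀ s, single (1 : ZMod (p ^ h)) (1 : ZMod p) ^ (cs s : ZMod (p ^ h)).val =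
      single (cs s : ZMod (p ^ h)) 1 := by
    simp [single_pow]
  have key := congrArg (coeff · (c : ZMod (p ^ h)))
    (prod_one_sub_pow_eq_prod_mul_geom_sum hx (card_fin _) fun s => (cs s : ZMod (p ^ h)).val)
  have hfilter : ∀ I : Finset (Fin (p ^ h - 1)),
      ∑ s ∈ I, (cs s : ZMod (p ^ h)) = c ↔ (p ^ h : ℤ) ∣ ∑ s ∈ I, cs s - c := fun I => by
    rw [← Int.cast_sum, eq_comm, ZMod.intCast_eq_intCast_iff_dvd_sub, Nat.cast_pow]
  have hval : ∀ s, ((cs s : ZMod (p ^ h)).val : ZMod p) = cs s := fun s => by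
    rw [ZMod.natCast_val, ZMod.cast_intCast (dvd_pow_self p hh.ne')]
  rw [← Nat.cast_prod, coeff_natCast_mul_geom_sum_single_one, Nat.cast_prod] at key
  simp only [hxa, coeff_prod_one_sub_single, hfilter, hval] at key
  refine (ZMod.intCast_eq_intCast_iff _ _ _).1 ?_
  push_cast
  exact key
end

section
/- Let p be a prime and h a positive integer. For any integers c, c_1,...,c_{2p^h−2}, the number of subsets I ⊆ {1,...,2p^h−2} with |I| = p^h − 1 and p^h dividing ∑_{s∈I} c_s − c is congruent modulo p to the coefficient of x^{p^h−1} in the polynomial ∏_{s=1}^{2p^h−2} (x − c_s) ∈ ℤ[x]. -/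
/-!
Let `q = p ^ h` and work in the group algebra `𝔽_p[ℤ/q]` with generator `x`. The coefficient of
`x ^ r` in `∑_{|I| = q-1} x ^ (∑_{s ∈ I} a_s)` is the number of subsets in question. Since
`(x - 1) ^ q = x ^ q - 1 = 0`, the element `N = (x - 1) ^ (q-1) = 1 + x + ⋯ + x ^ (q-1)`
satisfies `N x = N`. Expanding `x ^ a_s = (x ^ a_s - 1) + 1`, a set `t` with `|t| < q - 1` is
counted `C(2q - 2 - |t|, q - 1 - |t|)` times, a multiple of `p`; so only the products of `q - 1`
factors `x ^ a_s - 1 = (x - 1)(1 + ⋯ + x ^ (a_s - 1))` survive, each equal to `(∏ a_s) • N`.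
The generating function is therefore `e_{q-1}(a) • N`, all of whose coefficients are
`e_{q-1}(a)`, and by Vieta this is the coefficient of `x ^ (q-1)` up to `(-1) ^ (q-1) = 1`.
-/

open Polynomial Finset

theorem Nat.Prime.dvd_choose_pow_sub_one_add {p h r : ℕ} (hp : p.Prime) (hr₀ : 0 < r)
    (hr : r < p ^ h) : p ∣ (p ^ h - 1 + r).choose r := by
  by_contra hpC
  have hrC : (p ^ h - 1 + r).choose r * r = (p ^ h - 1 + r).choose (r - 1) * p ^ h := by
    have := Nat.choose_succ_right_eq (p ^ h - 1 + r) (r - 1)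
    rwa [Nat.sub_add_cancel hr₀, show p ^ h - 1 + r - (r - 1) = p ^ h by omega] at this
  have hqr : p ^ h ∣ r :=
    ((hp.coprime_iff_not_dvd.2 hpC).pow_left h).dvd_of_dvd_mul_left (Dvd.intro_left _ hrC.symm)
  exact absurd (Nat.le_of_dvd hr₀ hqr) (by omega)

section Collapse

variable {ι R : Type*} [DecidableEq ι]

theorem Finset.sum_powersetCard_prod_add_one [CommSemiring R] (S : Finset ι) (k : ℕ)
    (v : ι → R) :
    ∑ I ∈ S.powersetCard k, ∏ s ∈ I, (v s + 1) =
      ∑ t ∈ S.powerset, #{I ∈ S.powersetCard k | t ⊆ I} • ∏ s ∈ t, v s := by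
  simp_rw [prod_add_one]
  rw [sum_comm' (t' := S.powerset) (s' := fun t => {I ∈ S.powersetCard k | t ⊆ I})]
  · simp only [sum_const]
  · intro I t
    simp only [mem_powerset, mem_filter, mem_powersetCard]
    exact ⟨fun ⟨hI, htI⟩ => ⟨⟨hI, htI⟩, htI.trans hI.1⟩, fun h => h.1⟩

theorem Finset.cast_card_filter_powersetCard_subset [NonAssocSemiring R] {p h : ℕ}
    (hp : p.Prime) (hR : (p : R) = 0) {S t : Finset ι} (hS : #S = 2 * p ^ h - 2) (ht : t ⊆ S) :
    (#{I ∈ S.powersetCard (p ^ h - 1) | t ⊆ I} : R) = if #t = p ^ h - 1 then 1 else 0 := by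
  rcases lt_trichotomy #t (p ^ h - 1) with hlt | heq | hgt
  · obtain ⟨m, hm⟩ := hp.dvd_choose_pow_sub_one_add (h := h) (r := p ^ h - 1 - #t)
      (by omega) (by omega)
    rw [if_neg hlt.ne, card_filter_powersetCard_subset t S _ ht hlt.le, hS,
      show 2 * p ^ h - 2 - #t = p ^ h - 1 + (p ^ h - 1 - #t) by omega, hm, Nat.cast_mul, hR,
      zero_mul]
  · rw [if_pos heq, card_filter_powersetCard_subset t S _ ht heq.le, heq, Nat.sub_self,
      Nat.choose_zero_right, Nat.cast_one]
  · rw [if_neg hgt.ne', card_eq_zero.2 (filter_eq_empty_iff.2 fun I hI htI => ?_), Nat.cast_zero]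
    have := card_le_card htI
    rw [(mem_powersetCard.1 hI).2] at this
    omega

theorem Finset.sum_powersetCard_prod_add_one_of_cast_eq_zero [CommRing R] {p h : ℕ}
    (hp : p.Prime) (hR : (p : R) = 0) {S : Finset ι} (hS : #S = 2 * p ^ h - 2) (v : ι → R) :
    ∑ I ∈ S.powersetCard (p ^ h - 1), ∏ s ∈ I, (v s + 1) =
      ∑ I ∈ S.powersetCard (p ^ h - 1), ∏ s ∈ I, v s := by
  calc _ = ∑ t ∈ S.powerset, if #t = p ^ h - 1 then ∏ s ∈ t, v s else 0 := by
        rw [sum_powersetCard_prod_add_one]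
        refine sum_congr rfl fun t ht => ?_
        rw [nsmul_eq_mul, cast_card_filter_powersetCard_subset hp hR hS (mem_powerset.1 ht)]
        split_ifs <;> simp
    _ = _ := by rw [← sum_filter, ← powersetCard_eq_filter]

end Collapse

theorem mul_prod_geom_sum_eq_nsmul {ι R : Type*} [CommSemiring R] {N x : R} (hN : N * x = N)
    (J : Finset ι) (a : ι → ℕ) :
    N * ∏ s ∈ J, ∑ i ∈ range (a s), x ^ i = (∏ s ∈ J, a s : ℕ) • N := by
  have hpow (i : ℕ) : N * x ^ i = N := by
    induction i with
    | zero => rw [pow_zero, mul_one]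
    | succ i ih => rw [pow_succ, ← mul_assoc, ih, hN]
  have hgeom (n : ℕ) : N * ∑ i ∈ range n, x ^ i = n • N := by
    simp only [mul_sum, hpow, sum_const, card_range]
  classical
  induction J using Finset.induction_on with
  | empty => simp
  | insert s J hs ih =>
    rw [prod_insert hs, prod_insert hs, mul_left_comm, ih, mul_smul_comm, mul_comm, hgeom,
      smul_smul, mul_comm (a s)]

theorem sum_powersetCard_pow_sum_eq_nsmul {ι R : Type*} [CommRing R] {p h : ℕ} (hp : p.Prime)
    (hR : (p : R) = 0) {x : R} (hx : (x - 1) ^ p ^ h = 0) {S : Finset ι}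
    (hS : #S = 2 * p ^ h - 2) (a : ι → ℕ) :
    ∑ I ∈ S.powersetCard (p ^ h - 1), x ^ ∑ s ∈ I, a s =
      (∑ I ∈ S.powersetCard (p ^ h - 1), ∏ s ∈ I, a s : ℕ) • (x - 1) ^ (p ^ h - 1) := by
  classical
  have hN : (x - 1) ^ (p ^ h - 1) * x = (x - 1) ^ (p ^ h - 1) := by
    rw [← sub_eq_zero, ← mul_sub_one, ← pow_succ, Nat.sub_add_cancel (pow_pos hp.pos h), hx]
  calc _ = ∑ I ∈ S.powersetCard (p ^ h - 1), ∏ s ∈ I, ((x ^ a s - 1) + 1) := by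
        simp only [sub_add_cancel, prod_pow_eq_pow_sum]
    _ = ∑ I ∈ S.powersetCard (p ^ h - 1), ∏ s ∈ I, (x ^ a s - 1) :=
        sum_powersetCard_prod_add_one_of_cast_eq_zero hp hR hS _
    _ = ∑ I ∈ S.powersetCard (p ^ h - 1),
          (x - 1) ^ (p ^ h - 1) * ∏ s ∈ I, ∑ i ∈ range (a s), x ^ i := by
        refine sum_congr rfl fun I hI => ?_
        rw [← (mem_powersetCard.1 hI).2, ← prod_const, ← prod_mul_distrib]
        simp only [mul_geom_sum]
    _ = _ := by simp only [mul_prod_geom_sum_eq_nsmul hN, sum_smul]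

theorem sub_one_pow_prime_pow_sub_one {R : Type*} [CommRing R] (p : ℕ) [Fact p.Prime]
    [CharP R p] (h : ℕ) (x : R) : (x - 1) ^ (p ^ h - 1) = ∑ i ∈ range (p ^ h), x ^ i := by
  have hX : (X - 1 : R[X]) ^ (p ^ h - 1) = ∑ i ∈ range (p ^ h), X ^ i := by
    rw [← sub_eq_zero, ← (monic_X_sub_C (1 : R)).mul_left_eq_zero_iff, C_1, sub_mul,
      geom_sum_mul, ← pow_succ, Nat.sub_add_cancel (pow_pos (Fact.out : p.Prime).pos h),
      sub_pow_char_pow, one_pow, sub_self]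
  simpa using congrArg (eval x) hX

theorem neg_one_pow_prime_pow_sub_one (R : Type*) [Ring R] (p : ℕ) [Fact p.Prime] [CharP R p]
    (h : ℕ) : (-1 : R) ^ (p ^ h - 1) = 1 := by
  have := neg_one_pow_char_pow R p h
  rw [← Nat.sub_add_cancel (pow_pos (Fact.out : p.Prime).pos h), pow_succ, mul_neg_one,
    neg_inj] at this
  exact this

theorem card_filter_range_natCast_eq (n : ℕ) [NeZero n] (r : ZMod n) :
    #{i ∈ range n | ((i : ℕ) : ZMod n) = r} = 1 := by
  rw [card_eq_one]
  refine ⟨r.val, ext fun i => ?_⟩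
  simp only [mem_filter, mem_range, mem_singleton]
  constructor
  · rintro ⟨hi, rfl⟩
    rw [ZMod.val_natCast, Nat.mod_eq_of_lt hi]
  · rintro rfl
    exact ⟨ZMod.val_lt r, ZMod.natCast_zmod_val r⟩

theorem AddMonoidAlgebra.coeff_sum_single_one {α k G : Type*} [Semiring k] (s : Finset α)
    (f : α → G) (g : G) [DecidablePred fun a => f a = g] :
    (∑ a ∈ s, single (f a) (1 : k)).coeff g = #{a ∈ s | f a = g} := by
  classical
  simp [coeff_sum, Finsupp.single_apply, sum_boole]

theorem card_filter_powersetCard_natCast_sum_eq {ι : Type*} {p h : ℕ} [Fact p.Prime]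
    {S : Finset ι} (hS : #S = 2 * p ^ h - 2) (a : ι → ℕ) (r : ZMod (p ^ h)) :
    (#{I ∈ S.powersetCard (p ^ h - 1) | ((∑ s ∈ I, a s : ℕ) : ZMod (p ^ h)) = r} : ZMod p) =
      ∑ I ∈ S.powersetCard (p ^ h - 1), ∏ s ∈ I, (a s : ZMod p) := by
  let x : AddMonoidAlgebra (ZMod p) (ZMod (p ^ h)) := .single 1 1
  have : CharP (AddMonoidAlgebra (ZMod p) (ZMod (p ^ h))) p :=
    charP_of_injective_algebraMap (algebraMap (ZMod p) _).injective p
  have hxpow (n : ℕ) : x ^ n = AddMonoidAlgebra.single (n : ZMod (p ^ h)) 1 := by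
    rw [AddMonoidAlgebra.single_pow, nsmul_one, one_pow]
  have hx : (x - 1) ^ p ^ h = 0 := by
    rw [sub_pow_char_pow, one_pow, hxpow, ZMod.natCast_self, ← AddMonoidAlgebra.one_def, sub_self]
  have key := congrArg (fun y : AddMonoidAlgebra (ZMod p) (ZMod (p ^ h)) => y.coeff r)
    (sum_powersetCard_pow_sum_eq_nsmul Fact.out (CharP.cast_eq_zero _ p) hx hS a)
  simp only [hxpow, sub_one_pow_prime_pow_sub_one p h x] at key
  rw [AddMonoidAlgebra.coeff_smul, Finsupp.smul_apply, AddMonoidAlgebra.coeff_sum_single_one,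
    AddMonoidAlgebra.coeff_sum_single_one, card_filter_range_natCast_eq] at key
  simpa using key

theorem Finset.prod_X_sub_C_coeff {σ R : Type*} [CommRing R] (s : Finset σ) (f : σ → R) {k : ℕ}
    (hk : k ≤ #s) :
    (∏ i ∈ s, (X - C (f i))).coeff k =
      (-1) ^ (#s - k) * ∑ t ∈ s.powersetCard (#s - k), ∏ i ∈ t, f i := by
  simp_rw [sub_eq_add_neg, ← C_neg]
  rw [prod_X_add_C_coeff s _ hk, mul_sum]
  refine sum_congr rfl fun t ht => ?_
  rw [prod_neg, (mem_powersetCard.1 ht).2]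

theorem intCast_coeff_prod_X_sub_C {ι : Type*} [Fintype ι] {p h : ℕ} [Fact p.Prime]
    (hι : Fintype.card ι = 2 * p ^ h - 2) (f : ι → ℤ) :
    (((∏ s, (X - C (f s))).coeff (p ^ h - 1) : ℤ) : ZMod p) =
      ∑ t ∈ univ.powersetCard (p ^ h - 1), ∏ s ∈ t, (f s : ZMod p) := by
  have hcard : #(univ : Finset ι) - (p ^ h - 1) = p ^ h - 1 := by
    rw [card_univ, hι]; omega
  rw [← eq_intCast (Int.castRingHom (ZMod p)), ← coeff_map, Polynomial.map_prod]
  simp only [Polynomial.map_sub, map_X, map_C, Int.coe_castRingHom]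
  rw [prod_X_sub_C_coeff _ _ (by omega), hcard, neg_one_pow_prime_pow_sub_one, one_mul]

/-- **Corollary 3.3(ii)** (Sun): Let `p` be a prime and `h ≥ 1`.  For any integers
`c, c₁,…,c_{2p^h-2}`, the number of `I ⊆ [1,2p^h-2]` with `|I| = p^h - 1` and
`p^h ∣ ∑_{s∈I} c_s - c` is congruent modulo `p` to the coefficient of `x^{p^h-1}` in
`∏_{s=1}^{2p^h-2} (x - c_s)`. -/
theorem sun_corollary3_3ii (p : ℕ) (hp : p.Prime) (h : ℕ) (hh : 0 < h)
    (c : ℤ) (cs : Fin (2 * p ^ h - 2) → ℤ) :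
    (((Finset.univ : Finset (Fin (2 * p ^ h - 2))).powerset.filter
        (fun I => I.card = p ^ h - 1 ∧ (p ^ h : ℤ) ∣ (∑ s ∈ I, cs s) - c)).card : ℤ)
    ≡ (∏ s, (Polynomial.X - Polynomial.C (cs s))).coeff (p ^ h - 1) [ZMOD (p : ℤ)] := by
  have : Fact p.Prime := ⟨hp⟩
  let a : Fin (2 * p ^ h - 2) → ℕ := fun s => (cs s : ZMod (p ^ h)).val
  have ha (s) : (a s : ZMod p) = cs s := by
    rw [← ZMod.cast_eq_val (R := ZMod p), ZMod.cast_intCast (dvd_pow_self p hh.ne')]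
  have hfilter : {I ∈ (univ : Finset (Fin (2 * p ^ h - 2))).powerset |
        #I = p ^ h - 1 ∧ (p ^ h : ℤ) ∣ (∑ s ∈ I, cs s) - c} =
      {I ∈ (univ : Finset (Fin (2 * p ^ h - 2))).powersetCard (p ^ h - 1) |
        ((∑ s ∈ I, a s : ℕ) : ZMod (p ^ h)) = c} := by
    rw [powersetCard_eq_filter, filter_filter]
    refine filter_congr fun I _ => and_congr_right fun _ => ?_
    rw [eq_comm, ← Nat.cast_pow, ← ZMod.intCast_eq_intCast_iff_dvd_sub]
    simp [a]
  rw [← ZMod.intCast_eq_intCast_iff, Int.cast_natCast, hfilter,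
    card_filter_powersetCard_natCast_sum_eq (by simp) a, intCast_coeff_prod_X_sub_C (by simp)]
  simp only [ha]
end

section
/- Let q = p^h > 1 be a power of a prime p, and let c_1,...,c_{4q−2} be elements of the group (ℤ/qℤ)² = ℤ/qℤ ⊕ ℤ/qℤ. Then |{ I ⊆ {1,...,4q−2} : |I| = q and ∑_{s∈I} c_s = 0 }| ≡ |{ I ⊆ {1,...,4q−2} : |I| = 3q and ∑_{s∈I} c_s = 0 }| + 2 (mod p). -/
/-!
Work in the group algebra `𝔽_p[G]`, `G = (ℤ/qℤ)²`, with `x_s = [c_s]`. Modulo `p`, the number of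
`k`-subsets with zero sum is the coefficient of `0` in `e_k(x) = ∑_{|S| = k} ∏_{s ∈ S} x_s`.
Writing `x_s = 1 + y_s` gives `e_k(x) = ∑_I #{S ⊇ I : |S| = k} ∏_{s ∈ I} y_s`. Every `y_s` lies in
the ideal generated by `[(1,0)] - 1` and `[(0,1)] - 1`, whose `q`-th powers vanish in characteristic
`p`, so all products of `2q - 1` of the `y_s` vanish. For `0 < |I| ≤ 2q - 2` Lucas's theorem makes
the coefficients for `k = q` and `k = 3q` agree mod `p`, and for `I = ∅` they are `C(4q-2, q)` and
`C(4q-2, 3q)`, which differ by `2` mod `p`. Hence `e_q(x) = e_{3q}(x) + 2`.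
-/

open Finset AddMonoidAlgebra

namespace Choose

variable {p : ℕ} [Fact p.Prime] {h q : ℕ}

theorem cast_choose_mul_add_mul_add {n k A B C D : ℕ}
    (hq : q = p ^ h) (hn : n = A * q + B) (hk : k = C * q + D) (hB : B < q) (hD : D < q) :
    (n.choose k : ZMod p) = A.choose C * B.choose D := by
  subst hq hn hk
  induction h generalizing B D with
  | zero =>
    obtain rfl : B = 0 := by simpa using hB
    obtain rfl : D = 0 := by simpa using hD
    simp
  | succ h ih =>
    have hp := (Fact.out : p.Prime).pos
    have lucas (n k : ℕ) :
        (n.choose k : ZMod p) = (n % p).choose (k % p) * (n / p).choose (k / p) := by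
      exact_mod_cast (ZMod.intCast_eq_intCast_iff _ _ _).mpr choose_modEq_choose_mod_mul_choose_div
    have hmod (X Y : ℕ) : (X * p ^ (h + 1) + Y) % p = Y % p := by
      rw [pow_succ, ← mul_assoc, add_comm, Nat.add_mul_mod_self_right]
    have hdiv (X Y : ℕ) : (X * p ^ (h + 1) + Y) / p = X * p ^ h + Y / p := by
      rw [pow_succ, ← mul_assoc, add_comm, Nat.add_mul_div_right _ _ hp, add_comm]
    rw [pow_succ] at hB hD
    rw [lucas, hmod, hmod, hdiv, hdiv, ih (Nat.div_lt_of_lt_mul (mul_comm p _ ▸ hB))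
      (Nat.div_lt_of_lt_mul (mul_comm p _ ▸ hD)), lucas B D]
    ring

theorem cast_choose_four_mul_sub_two (hq : q = p ^ h) :
    ((4 * q - 2).choose q : ZMod p) = (4 * q - 2).choose (3 * q) + 2 := by
  rcases Nat.eq_zero_or_pos h with rfl | hh
  · subst hq
    norm_num [Nat.choose]
  have hq2 : 2 ≤ q := hq ▸ (Nat.le_self_pow hh.ne' p).trans' (Fact.out : p.Prime).two_le
  have lucas_q : ((4 * q - 2).choose q : ZMod p) = (3).choose 1 * (q - 2).choose 0 :=
    cast_choose_mul_add_mul_add hq (by omega) (by omega) (by omega) (by omega)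
  have lucas_3q : ((4 * q - 2).choose (3 * q) : ZMod p) = (3).choose 3 * (q - 2).choose 0 :=
    cast_choose_mul_add_mul_add hq (by omega) (by omega) (by omega) (by omega)
  rw [lucas_q, lucas_3q]
  norm_num

theorem cast_choose_four_mul_sub_two_sub_of_le (hq : q = p ^ h) {m : ℕ} (hm0 : 0 < m)
    (hmq : m ≤ q) (hm : m < 2 * q - 1) :
    ((4 * q - 2 - m).choose (q - m) : ZMod p) = (4 * q - 2 - m).choose (3 * q - m) := by
  by_cases hsmall : m + 2 ≤ q
  · have lucas_q : ((4 * q - 2 - m).choose (q - m) : ZMod p) =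
        (3).choose 0 * (q - 2 - m).choose (q - m) :=
      cast_choose_mul_add_mul_add hq (by omega) (by omega) (by omega) (by omega)
    have lucas_3q : ((4 * q - 2 - m).choose (3 * q - m) : ZMod p) =
        (3).choose 2 * (q - 2 - m).choose (q - m) :=
      cast_choose_mul_add_mul_add hq (by omega) (by omega) (by omega) (by omega)
    rw [lucas_q, lucas_3q, Nat.choose_eq_zero_of_lt (by omega : q - 2 - m < q - m)]
    simp
  · have lucas_q : ((4 * q - 2 - m).choose (q - m) : ZMod p) =
        (2).choose 0 * (2 * q - 2 - m).choose (q - m) :=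
      cast_choose_mul_add_mul_add hq (by omega) (by omega) (by omega) (by omega)
    have lucas_3q : ((4 * q - 2 - m).choose (3 * q - m) : ZMod p) =
        (2).choose 2 * (2 * q - 2 - m).choose (q - m) :=
      cast_choose_mul_add_mul_add hq (by omega) (by omega) (by omega) (by omega)
    rw [lucas_q, lucas_3q]
    simp

theorem cast_choose_four_mul_sub_two_sub_of_lt (hq : q = p ^ h) {m : ℕ} (hqm : q < m)
    (hm : m < 2 * q - 1) :
    ((4 * q - 2 - m).choose (3 * q - m) : ZMod p) = 0 := by
  have lucas_3q : ((4 * q - 2 - m).choose (3 * q - m) : ZMod p) =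
      (2).choose 1 * (2 * q - 2 - m).choose (2 * q - m) :=
    cast_choose_mul_add_mul_add hq (by omega) (by omega) (by omega) (by omega)
  rw [lucas_3q, Nat.choose_eq_zero_of_lt (by omega : 2 * q - 2 - m < 2 * q - m)]
  simp

end Choose

theorem Finset.sum_powersetCard_prod_one_add {ι R : Type*} [DecidableEq ι] [CommSemiring R]
    (s : Finset ι) (y : ι → R) (k : ℕ) :
    ∑ S ∈ s.powersetCard k, ∏ i ∈ S, (1 + y i) =
      ∑ I ∈ s.powerset, #{S ∈ s.powersetCard k | I ⊆ S} • ∏ i ∈ I, y i := by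
  simp_rw [prod_one_add]
  rw [sum_comm' (t' := s.powerset) (s' := fun I => {S ∈ s.powersetCard k | I ⊆ S})]
  · simp_rw [sum_const]
  · intro S I
    simp only [mem_powersetCard, mem_powerset, mem_filter]
    exact ⟨fun ⟨hS, hI⟩ => ⟨⟨hS, hI⟩, hI.trans hS.1⟩, fun ⟨⟨hS, hI⟩, _⟩ => ⟨hS, hI⟩⟩

theorem cast_card_filter_powersetCard_subset_eq {ι : Type*} [DecidableEq ι] {p : ℕ}
    [Fact p.Prime] {h q : ℕ} (hq : q = p ^ h) {s I : Finset ι} (hs : #s = 4 * q - 2)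
    (hI : I ⊆ s) (hI0 : 0 < #I) (hI1 : #I < 2 * q - 1) :
    (#{S ∈ s.powersetCard q | I ⊆ S} : ZMod p) = #{S ∈ s.powersetCard (3 * q) | I ⊆ S} := by
  rw [card_filter_powersetCard_subset I s (3 * q) hI (by omega), hs]
  rcases le_or_gt #I q with hIq | hIq
  · rw [card_filter_powersetCard_subset I s q hI hIq, hs]
    exact Choose.cast_choose_four_mul_sub_two_sub_of_le hq hI0 hIq hI1
  · have hnone : {S ∈ s.powersetCard q | I ⊆ S} = ∅ :=
      filter_eq_empty_iff.mpr fun S hS hIS => by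
        have := card_le_card hIS
        rw [mem_powersetCard] at hS
        omega
    rw [hnone, card_empty, Nat.cast_zero,
      Choose.cast_choose_four_mul_sub_two_sub_of_lt hq hIq hI1]

theorem Finset.sum_powersetCard_prod_one_add_eq_add_two {ι R : Type*} [DecidableEq ι]
    [CommRing R] {p : ℕ} [Fact p.Prime] [CharP R p] {h q : ℕ} (hq : q = p ^ h)
    {s : Finset ι} (hs : #s = 4 * q - 2) {y : ι → R}
    (hy : ∀ I ⊆ s, 2 * q - 1 ≤ #I → ∏ i ∈ I, y i = 0) :
    ∑ S ∈ s.powersetCard q, ∏ i ∈ S, (1 + y i) =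
      ∑ S ∈ s.powersetCard (3 * q), ∏ i ∈ S, (1 + y i) + 2 := by
  have hcast (n : ℕ) : (n : R) = ZMod.castHom dvd_rfl R n := (map_natCast _ n).symm
  have hterm : ∀ I ∈ s.powerset.erase ∅,
      #{S ∈ s.powersetCard q | I ⊆ S} • ∏ i ∈ I, y i =
        #{S ∈ s.powersetCard (3 * q) | I ⊆ S} • ∏ i ∈ I, y i := by
    intro I hI
    obtain ⟨hI0, hIs⟩ := mem_erase.mp hI
    rw [mem_powerset] at hIs
    by_cases hbig : 2 * q - 1 ≤ #I
    · simp [hy I hIs hbig]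
    · rw [nsmul_eq_mul, nsmul_eq_mul, hcast, hcast,
        cast_card_filter_powersetCard_subset_eq hq hs hIs (card_pos.mpr
          (nonempty_iff_ne_empty.mpr hI0)) (by omega)]
  rw [sum_powersetCard_prod_one_add, sum_powersetCard_prod_one_add,
    ← add_sum_erase _ _ (empty_mem_powerset s), ← add_sum_erase _ _ (empty_mem_powerset s),
    sum_congr rfl hterm]
  simp only [empty_subset, filter_true, card_powersetCard, hs, prod_empty, nsmul_eq_mul, mul_one]
  have hempty : ((4 * q - 2).choose q : R) = (4 * q - 2).choose (3 * q) + 2 := by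
    rw [hcast, Choose.cast_choose_four_mul_sub_two hq, map_add, map_natCast, map_ofNat]
  rw [hempty]
  ring

instance AddMonoidAlgebra.charP {k G : Type*} [CommSemiring k] [AddMonoid G] (p : ℕ)
    [CharP k p] : CharP (AddMonoidAlgebra k G) p :=
  charP_of_injective_algebraMap (single_right_injective (m := (0 : G))) p

theorem Finset.prod_eq_zero_of_mem_span_pair {ι R : Type*} [CommRing R] {u v : R} {m n : ℕ}
    (hu : u ^ m = 0) (hv : v ^ n = 0) {s : Finset ι} {f : ι → R}
    (hf : ∀ i ∈ s, f i ∈ Ideal.span {u, v}) (hs : m + n - 1 ≤ #s) : ∏ i ∈ s, f i = 0 := by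
  classical
  choose! a b hab using fun i hi => Ideal.mem_span_pair.mp (hf i hi)
  rw [← prod_congr rfl hab, prod_add]
  refine sum_eq_zero fun t ht => ?_
  rw [mem_powerset] at ht
  simp only [prod_mul_distrib, prod_const]
  rcases le_or_gt m #t with hmt | hmt
  · rw [pow_eq_zero_of_le hmt hu]
    ring
  · rw [pow_eq_zero_of_le (by rw [card_sdiff_of_subset ht]; omega) hv]
    ring

section GroupAlgebra

variable {k : Type*} [CommRing k]

theorem AddMonoidAlgebra.single_sub_one_pow_char_pow_eq_zero {G : Type*} [AddCommMonoid G]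
    {p : ℕ} [Fact p.Prime] [CharP k p] {n : ℕ} {x : G} (hx : p ^ n • x = 0) :
    (single x (1 : k) - 1) ^ p ^ n = 0 := by
  rw [sub_pow_char_pow, single_pow, one_pow, one_pow, hx, ← one_def, sub_self]

theorem AddMonoidAlgebra.single_sub_one_dvd_single_nsmul_sub_one {G : Type*} [AddMonoid G]
    (x : G) (n : ℕ) : single x (1 : k) - 1 ∣ single (n • x) 1 - 1 := by
  simpa [single_pow] using sub_one_dvd_pow_sub_one (single x (1 : k)) n

theorem AddMonoidAlgebra.single_sub_one_mem_span_pair {q : ℕ} [NeZero q]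
    (x : ZMod q × ZMod q) :
    single x (1 : k) - 1 ∈ Ideal.span {single (1, 0) 1 - 1, single (0, 1) 1 - 1} := by
  have hx : x = x.1.val • ((1, 0) : ZMod q × ZMod q) + x.2.val • (0, 1) := by ext <;> simp
  have hsplit (a b : AddMonoidAlgebra k (ZMod q × ZMod q)) :
      a * b - 1 = (a - 1) * b + (b - 1) := by
    ring
  rw [hx, ← one_mul (1 : k), ← single_mul_single, hsplit]
  refine add_mem (Ideal.mul_mem_right _ _ ?_) ?_
  · exact Ideal.mem_of_dvd _ (single_sub_one_dvd_single_nsmul_sub_one _ _)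
      (Ideal.subset_span (by simp))
  · exact Ideal.mem_of_dvd _ (single_sub_one_dvd_single_nsmul_sub_one _ _)
      (Ideal.subset_span (by simp))

theorem AddMonoidAlgebra.prod_single_sub_one_eq_zero {p : ℕ} [Fact p.Prime] [CharP k p]
    {h q : ℕ} (hq : q = p ^ h) {ι : Type*} (c : ι → ZMod q × ZMod q) {s : Finset ι}
    (hs : 2 * q - 1 ≤ #s) : ∏ i ∈ s, (single (c i) (1 : k) - 1) = 0 := by
  have : NeZero q := ⟨hq ▸ pow_ne_zero h (Fact.out : p.Prime).ne_zero⟩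
  have hqx (x : ZMod q × ZMod q) : q • x = 0 := by ext <;> simp
  subst hq
  have hnil (x : ZMod (p ^ h) × ZMod (p ^ h)) : (single x (1 : k) - 1) ^ p ^ h = 0 :=
    single_sub_one_pow_char_pow_eq_zero (hqx x)
  exact prod_eq_zero_of_mem_span_pair (hnil _) (hnil _)
    (fun i _ => single_sub_one_mem_span_pair (c i)) (by omega)

end GroupAlgebra

theorem AddMonoidAlgebra.coeff_sum_prod_single_one_apply_zero {ι k G : Type*} [CommSemiring k]
    [AddCommMonoid G] [DecidableEq G] (T : Finset (Finset ι)) (c : ι → G) :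
    (∑ S ∈ T, ∏ i ∈ S, single (c i) (1 : k)).coeff 0 = #{S ∈ T | ∑ i ∈ S, c i = 0} := by
  simp [coeff_sum, coeff_single, Finsupp.single_apply, sum_boole]

theorem kemnitz_type_congruence_general (p : ℕ) (hp : p.Prime) (h : ℕ)
    (q : ℕ) (hq : q = p ^ h)
    (c : Fin (4 * q - 2) → ZMod q × ZMod q) :
    (((Finset.univ : Finset (Fin (4 * q - 2))).powerset.filter
        (fun I => I.card = q ∧ ∑ s ∈ I, c s = 0)).card : ℤ)
    ≡ (((Finset.univ : Finset (Fin (4 * q - 2))).powerset.filter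
        (fun I => I.card = 3 * q ∧ ∑ s ∈ I, c s = 0)).card : ℤ) + 2 [ZMOD (p : ℤ)] := by
  have : Fact p.Prime := ⟨hp⟩
  have key := sum_powersetCard_prod_one_add_eq_add_two (R := AddMonoidAlgebra (ZMod p) _) hq
    (s := univ) (by simp) (y := fun i => single (c i) 1 - 1)
    (fun I _ hI => prod_single_sub_one_eq_zero hq c hI)
  simp only [add_sub_cancel] at key
  have hcount := congrArg (fun x => x.coeff 0) key
  simp only [coeff_add, Finsupp.add_apply, coeff_sum_prod_single_one_apply_zero, coeff_ofNat,
    Finsupp.single_eq_same, powersetCard_eq_filter, filter_filter] at hcount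
  rw [← ZMod.intCast_eq_intCast_iff]
  push_cast
  exact hcount

/-- Let `q = p^h > 1` be a prime power and `c₁,…,c_{4q-2} ∈ (ℤ/qℤ)²`.  Then the number of
`I ⊆ [1,4q-2]` with `|I| = q` and `∑_{s∈I} c_s = 0` is congruent modulo `p` to the number
of `I ⊆ [1,4q-2]` with `|I| = 3q` and `∑_{s∈I} c_s = 0`, plus `2`. -/
theorem kemnitz_type_congruence (p : ℕ) (hp : p.Prime) (h : ℕ) (hh : 0 < h)
    (q : ℕ) (hq : q = p ^ h)
    (c : Fin (4 * q - 2) → ZMod q × ZMod q) :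
    (((Finset.univ : Finset (Fin (4 * q - 2))).powerset.filter
        (fun I => I.card = q ∧ ∑ s ∈ I, c s = 0)).card : ℤ)
    ≡ (((Finset.univ : Finset (Fin (4 * q - 2))).powerset.filter
        (fun I => I.card = 3 * q ∧ ∑ s ∈ I, c s = 0)).card : ℤ) + 2 [ZMOD (p : ℤ)] :=
  kemnitz_type_congruence_general p hp h q hq c
end
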